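/- arXiv:1609.03999 — 6 statements merged into one kernel-verified Lean document; each statement's English description precedes it below -/
import Mathlib

section
/- Suppose ρ(M) < 1 (so that I − Hᵀ is invertible). Then for every fluid model solution and every t ≥ 0 such that Q(u) ≠ 0 for all u ∈ [0, t], one has eᵀ (I − Hᵀ)⁻¹ G⁻¹ Q(t) = eᵀ (I − Hᵀ)⁻¹ G⁻¹ Q(0) − t; in particular f(t) = eᵀ (I − Hᵀ)⁻¹ G⁻¹ Q(t) decreases at rate exactly 1 as long as the fluid system is nonempty. -/
open Matrix MeasureTheory Filter Set

/-- The spectral radius of a real square matrix: the maximum modulus of its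
complex eigenvalues (roots of the characteristic polynomial over `ℂ`). -/
noncomputable def specRad {K : ℕ} (A : Matrix (Fin K) (Fin K) ℝ) : ℝ :=
  sSup {r : ℝ | ∃ z : ℂ, (A.map (Complex.ofReal)).charpoly.IsRoot z ∧ r = ‖z‖}

/-- The data of the multiclass fluid model: a nonnegative matrix of arrival rates `Λ`,
a nonnegative vector `lam0` of arrival rates when the system is empty, and positive
service rates `μ`. -/
structure FluidData (K : ℕ) where
  Λ : Matrix (Fin K) (Fin K) ℝ
  lam0 : Fin K → ℝ
  μ : Fin K → ℝ
  Λ_nonneg : ∀ i j, 0 ≤ Λ i j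
  lam0_nonneg : ∀ i, 0 ≤ lam0 i
  μ_pos : ∀ i, 0 < μ i

namespace FluidData

variable {K : ℕ}

/-- `G = diag(μ₁, …, μ_K)`. -/
noncomputable def G (fd : FluidData K) : Matrix (Fin K) (Fin K) ℝ :=
  Matrix.diagonal fd.μ

/-- `M = G⁻¹ Λ`. -/
noncomputable def M (fd : FluidData K) : Matrix (Fin K) (Fin K) ℝ :=
  fd.G⁻¹ * fd.Λ

/-- `H = G M G⁻¹`. -/
noncomputable def H (fd : FluidData K) : Matrix (Fin K) (Fin K) ℝ :=
  fd.G * fd.M * fd.G⁻¹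

end FluidData

/-- A fluid model solution: queue-length process `Q` and cumulative-service process `T`
(on `[0,∞)`; values for negative times are irrelevant), where each `Tᵢ` is Lipschitz,
nondecreasing, starts at `0`; the idle time `Y t = t - ∑ᵢ Tᵢ t` is nondecreasing;
the dynamics `Q t = Q 0 + (Mᵀ - I) G T t + (Y t) • λ₀` hold; `Q` is componentwise
nonnegative; and the non-idling condition holds: `Y` is constant on any interval
on which `Q` never vanishes. -/
structure FluidSol {K : ℕ} (fd : FluidData K) where
  Q : ℝ → Fin K → ℝ
  T : ℝ → Fin K → ℝ
  T_lip : ∀ i, ∃ L : NNReal, LipschitzWith L (fun t => T t i)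
  T_mono : ∀ i, MonotoneOn (fun t => T t i) (Set.Ici (0 : ℝ))
  T_zero : ∀ i, T 0 i = 0
  Y_mono : MonotoneOn (fun t => t - ∑ i, T t i) (Set.Ici (0 : ℝ))
  dynamics : ∀ t : ℝ, 0 ≤ t →
    Q t = Q 0 + (fd.M.transpose - 1) *ᵥ (fd.G *ᵥ T t) + (t - ∑ i, T t i) • fd.lam0
  Q_nonneg : ∀ t : ℝ, 0 ≤ t → ∀ i, 0 ≤ Q t i
  nonidling : ∀ s t : ℝ, 0 ≤ s → s ≤ t → (∀ u ∈ Set.Icc s t, Q u ≠ 0) →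
    s - ∑ i, T s i = t - ∑ i, T t i



lemma eval_one_charpoly {n : Type*} [Fintype n] [DecidableEq n] {R : Type*} [CommRing R]
    (A : Matrix n n R) : A.charpoly.eval 1 = (1 - A).det := by
  rw [Matrix.charpoly, ← Polynomial.coe_evalRingHom, RingHom.map_det]
  congr 1
  ext i j
  by_cases h : i = j <;>
    simp [Matrix.charmatrix_apply, h, Matrix.one_apply, Matrix.diagonal_apply]

/-- If `ρ(M) < 1` (so that `I - Hᵀ` is invertible), then for every fluid
model solution and every `t ≥ 0` such that `Q u ≠ 0` for all `u ∈ [0, t]`, one has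
`eᵀ (I - Hᵀ)⁻¹ G⁻¹ Q t = eᵀ (I - Hᵀ)⁻¹ G⁻¹ Q 0 - t`; in particular the Lyapunov
function `f t = eᵀ (I - Hᵀ)⁻¹ G⁻¹ Q t` decreases at rate exactly `1` as long as the
fluid system is nonempty. -/
theorem stmt0 {K : ℕ} (hK : 1 ≤ K) (fd : FluidData K)
    (hρ : specRad fd.M < 1) (sol : FluidSol fd) :
    IsUnit (1 - fd.H.transpose) ∧
    ∀ t : ℝ, 0 ≤ t → (∀ u ∈ Set.Icc (0 : ℝ) t, sol.Q u ≠ 0) →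
      (fun _ => (1 : ℝ)) ⬝ᵥ ((1 - fd.H.transpose)⁻¹ *ᵥ (fd.G⁻¹ *ᵥ sol.Q t))
        = (fun _ => (1 : ℝ)) ⬝ᵥ ((1 - fd.H.transpose)⁻¹ *ᵥ (fd.G⁻¹ *ᵥ sol.Q 0)) - t := by
  have hGdet : IsUnit fd.G.det := by
    rw [FluidData.G, Matrix.det_diagonal]
    exact isUnit_iff_ne_zero.mpr (Finset.prod_ne_zero_iff.mpr fun i _ => (fd.μ_pos i).ne')
  have hGinv : fd.G⁻¹ * fd.G = 1 := Matrix.nonsing_inv_mul _ hGdet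
  have hHt : fd.H.transpose = fd.G⁻¹ * fd.M.transpose * fd.G := by
    rw [FluidData.H, Matrix.transpose_mul, Matrix.transpose_mul,
      Matrix.transpose_nonsing_inv]
    rw [show fd.G.transpose = fd.G from Matrix.diagonal_transpose _, Matrix.mul_assoc]
  have key : fd.G⁻¹ * (fd.M.transpose - 1) * fd.G = fd.H.transpose - 1 := by
    rw [hHt, Matrix.mul_sub, Matrix.sub_mul, Matrix.mul_one, hGinv]
  have hdetM : (1 - fd.M).det ≠ 0 := by
    intro h0
    set p := ((fd.M.map (Complex.ofReal)).charpoly) with hp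
    have hproot : p.IsRoot 1 := by
      have h1 : p.eval 1 = (1 - fd.M.map (Complex.ofReal)).det := eval_one_charpoly _
      rw [Polynomial.IsRoot, h1]
      have h2 : (1 - fd.M.map (Complex.ofReal)) = (1 - fd.M).map (Complex.ofReal) := by
        ext i j
        by_cases h : i = j <;> simp [Matrix.one_apply, h]
      rw [h2]
      have h3 : ((1 - fd.M).map Complex.ofReal).det = Complex.ofReal (1 - fd.M).det :=
        (RingHom.map_det Complex.ofRealHom (1 - fd.M)).symm
      rw [h3, h0, Complex.ofReal_zero]
    have hpne : p ≠ 0 := (Matrix.charpoly_monic _).ne_zero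
    have hmem : (1 : ℝ) ∈ {r : ℝ | ∃ z : ℂ,
        (fd.M.map (Complex.ofReal)).charpoly.IsRoot z ∧ r = ‖z‖} :=
      ⟨1, hproot, by simp⟩
    have hbdd : BddAbove {r : ℝ | ∃ z : ℂ,
        (fd.M.map (Complex.ofReal)).charpoly.IsRoot z ∧ r = ‖z‖} := by
      have heq : {r : ℝ | ∃ z : ℂ, (fd.M.map (Complex.ofReal)).charpoly.IsRoot z ∧
          r = ‖z‖} = (‖·‖) '' {z | p.IsRoot z} := by
        ext r; constructor
        · rintro ⟨z, hz, rfl⟩; exact ⟨z, hz, rfl⟩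
        · rintro ⟨z, hz, rfl⟩; exact ⟨z, hz, rfl⟩
      rw [heq]
      exact ((Polynomial.finite_setOf_isRoot hpne).image _).bddAbove
    have : (1 : ℝ) ≤ specRad fd.M := le_csSup hbdd hmem
    linarith
  have hdetH : (1 - fd.H.transpose).det ≠ 0 := by
    have h1 : (1 : Matrix (Fin K) (Fin K) ℝ) - fd.H.transpose
        = fd.G⁻¹ * (1 - fd.M.transpose) * fd.G := by
      rw [Matrix.mul_sub, Matrix.sub_mul, Matrix.mul_one, hGinv, hHt]
    rw [h1, Matrix.det_mul, Matrix.det_mul]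
    have hdetMt : (1 - fd.M.transpose).det ≠ 0 := by
      have h2 : (1 : Matrix (Fin K) (Fin K) ℝ) - fd.M.transpose = (1 - fd.M).transpose := by
        rw [Matrix.transpose_sub, Matrix.transpose_one]
      rw [h2, Matrix.det_transpose]
      exact hdetM
    have hg : fd.G⁻¹.det * fd.G.det = 1 := by
      rw [← Matrix.det_mul, hGinv, Matrix.det_one]
    intro h
    rcases mul_eq_zero.mp h with h' | h'
    · rcases mul_eq_zero.mp h' with h'' | h''
      · rw [h'', zero_mul] at hg; exact one_ne_zero hg.symm
      · exact hdetMt h''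
    · rw [h', mul_zero] at hg; exact one_ne_zero hg.symm
  have hunit : IsUnit (1 - fd.H.transpose) :=
    (Matrix.isUnit_iff_isUnit_det _).mpr (isUnit_iff_ne_zero.mpr hdetH)
  refine ⟨hunit, fun t ht hQ => ?_⟩
  have hY := sol.nonidling 0 t le_rfl ht hQ
  have hY0 : (0 : ℝ) - ∑ i, sol.T 0 i = 0 := by simp [sol.T_zero]
  have hTt : t - ∑ i, sol.T t i = 0 := by rw [← hY, hY0]
  have hTsum : ∑ i, sol.T t i = t := by linarith
  have hdyn := sol.dynamics t ht
  rw [hTt, zero_smul, add_zero] at hdyn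
  have hBinv : (1 - fd.H.transpose)⁻¹ * (1 - fd.H.transpose) = 1 :=
    Matrix.nonsing_inv_mul _ (isUnit_iff_ne_zero.mpr hdetH)
  have hmid : (1 - fd.H.transpose)⁻¹ *ᵥ (fd.G⁻¹ *ᵥ ((fd.M.transpose - 1) *ᵥ
      (fd.G *ᵥ sol.T t))) = -(sol.T t) := by
    rw [Matrix.mulVec_mulVec, Matrix.mulVec_mulVec, Matrix.mulVec_mulVec]
    have key' : fd.G⁻¹ * ((fd.M.transpose - 1) * fd.G) = fd.H.transpose - 1 := by
      rw [← Matrix.mul_assoc]; exact key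
    have hprod : (1 - fd.H.transpose)⁻¹ * fd.G⁻¹ * (fd.M.transpose - 1) * fd.G
        = -1 := by
      simp only [Matrix.mul_assoc]
      have hneg : fd.H.transpose - 1 = -(1 - fd.H.transpose) := (neg_sub _ _).symm
      rw [key', hneg, Matrix.mul_neg, hBinv]
    rw [hprod]
    simp [Matrix.neg_mulVec]
  rw [hdyn, Matrix.mulVec_add, Matrix.mulVec_add, dotProduct_add, hmid]
  have hdot : (fun _ : Fin K => (1 : ℝ)) ⬝ᵥ -(sol.T t) = -t := by
    simp [dotProduct, hTsum]
  rw [hdot]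
  ring
end

section
/- Suppose ρ(M) < 1. Then the fluid model is globally stable with draining time eᵀ (I − Hᵀ)⁻¹ G⁻¹ Q(0): every fluid model solution satisfies Q(t) = 0 for all t ≥ eᵀ (I − Hᵀ)⁻¹ G⁻¹ Q(0). -/
open Matrix MeasureTheory Filter Set

section AuxNeumann
open Topology

variable {K : ℕ}

attribute [local instance] Matrix.linftyOpNormedRing Matrix.linftyOpNormedAlgebra

noncomputable local instance : CompleteSpace (Matrix (Fin K) (Fin K) ℂ) :=
  FiniteDimensional.complete ℂ _

private lemma aux_eval_charpoly (A : Matrix (Fin K) (Fin K) ℂ) (z : ℂ) :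
    A.charpoly.eval z = (z • (1 : Matrix (Fin K) (Fin K) ℂ) - A).det := by
  rw [Matrix.charpoly, ← Polynomial.coe_evalRingHom, RingHom.map_det]
  congr 1
  ext i j
  by_cases h : i = j
  · subst h
    simp [Matrix.charmatrix_apply_eq, Matrix.one_apply_eq]
  · simp [Matrix.charmatrix_apply_ne _ _ _ h, Matrix.one_apply_ne h]

private lemma aux_mem_spectrum_iff_isRoot (A : Matrix (Fin K) (Fin K) ℂ) (z : ℂ) :
    z ∈ spectrum ℂ A ↔ A.charpoly.IsRoot z := by
  rw [spectrum.mem_iff, Polynomial.IsRoot, aux_eval_charpoly,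
    Algebra.algebraMap_eq_smul_one]
  constructor
  · intro h
    by_contra hdet
    exact h ((Matrix.isUnit_iff_isUnit_det _).2 (isUnit_iff_ne_zero.2 hdet))
  · intro h hu
    exact absurd ((Matrix.isUnit_iff_isUnit_det _).1 hu) (by simp [h])

private theorem aux_neumann_exists (hK : 1 ≤ K) (B : Matrix (Fin K) (Fin K) ℝ)
    (hB : ∀ i j, 0 ≤ B i j)
    (hroot : ∀ z : ℂ, ((B.map (Complex.ofReal)).charpoly).IsRoot z → ‖z‖ < 1) :
    ∃ S : Matrix (Fin K) (Fin K) ℝ,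
      (1 - B) * S = 1 ∧ S * (1 - B) = 1 ∧ (∀ i j, 0 ≤ S i j) ∧ S = 1 + B * S := by
  haveI : Nonempty (Fin K) := ⟨⟨0, hK⟩⟩
  set φ : Matrix (Fin K) (Fin K) ℝ →+* Matrix (Fin K) (Fin K) ℂ :=
    (Complex.ofRealHom.mapMatrix) with hφ
  have hφ_apply : ∀ X : Matrix (Fin K) (Fin K) ℝ, φ X = X.map Complex.ofReal := fun X => rfl
  have hφinj : Function.Injective φ := by
    intro X Y h
    ext i j
    have h2 : (X.map Complex.ofReal) i j = (Y.map Complex.ofReal) i j := by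
      rw [← hφ_apply, ← hφ_apply, h]
    simp only [Matrix.map_apply] at h2
    exact_mod_cast h2
  set A : Matrix (Fin K) (Fin K) ℂ := φ B with hA
  have hsr : spectralRadius ℂ A < 1 := by
    have h1 : ∀ z ∈ spectrum ℂ A, ‖z‖₊ < (1 : NNReal) := by
      intro z hz
      have := hroot z ((aux_mem_spectrum_iff_isRoot A z).1 hz)
      rw [← NNReal.coe_lt_coe]
      simpa using this
    simpa using spectrum.spectralRadius_lt_of_forall_lt_of_nonempty (spectrum.nonempty A) h1
  have hsum : Summable (fun n : ℕ => A ^ n) := by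
    obtain ⟨c, hc1, hc2⟩ := exists_between hsr
    have hc_ne : c ≠ ⊤ := (hc2.trans_le le_top).ne
    set r : NNReal := c.toNNReal with hr
    have hcr : c = (r : ENNReal) := (ENNReal.coe_toNNReal hc_ne).symm
    have hr1 : (r : ℝ) < 1 := by
      have := hc2; rw [hcr] at this; exact_mod_cast this
    have hev : ∀ᶠ n : ℕ in Filter.atTop,
        (‖A ^ n‖₊ : ENNReal) ^ (1 / (n:ℝ)) < (r : ENNReal) := by
      apply (spectrum.pow_nnnorm_pow_one_div_tendsto_nhds_spectralRadius A).eventually_lt_const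
      rw [← hcr]; exact hc1
    have hev2 : ∀ᶠ n : ℕ in Filter.atTop, ‖A ^ n‖ ≤ (r : ℝ) ^ n := by
      filter_upwards [hev, Filter.eventually_ge_atTop 1] with n hn hn1
      have hn0 : (n : ℝ) ≠ 0 := by positivity
      have : ((‖A ^ n‖₊ : ENNReal) ^ (1 / (n:ℝ))) ^ (n : ℝ) ≤ ((r : ENNReal)) ^ (n : ℝ) :=
        ENNReal.rpow_le_rpow hn.le (by positivity)
      rw [← ENNReal.rpow_mul, one_div, inv_mul_cancel₀ hn0, ENNReal.rpow_one,
        ENNReal.rpow_natCast, ← ENNReal.coe_pow, ENNReal.coe_le_coe] at this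
      calc ‖A ^ n‖ = ((‖A ^ n‖₊ : ℝ)) := rfl
        _ ≤ ((r ^ n : NNReal) : ℝ) := by exact_mod_cast this
        _ = (r : ℝ) ^ n := by push_cast; ring
    exact Summable.of_norm_bounded_eventually_nat
      (summable_geometric_of_lt_one r.coe_nonneg hr1) hev2
  set SA : Matrix (Fin K) (Fin K) ℂ := ∑' n : ℕ, A ^ n with hSA
  have hs : HasSum (fun n : ℕ => A ^ n) SA := hsum.hasSum
  have htail : HasSum (fun n : ℕ => A ^ (n + 1)) (SA - 1) := by
    have := (hasSum_nat_add_iff' (f := fun n : ℕ => A ^ n) 1).2 hs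
    simpa using this
  have hmulL : A * SA = SA - 1 := by
    have h1 : HasSum (fun n : ℕ => A * A ^ n) (A * SA) := hs.mul_left A
    have h2 : HasSum (fun n : ℕ => A * A ^ n) (SA - 1) := by
      refine htail.congr_fun fun n => ?_
      rw [pow_succ']
    exact h1.unique h2
  have hmulR : SA * A = SA - 1 := by
    have h1 : HasSum (fun n : ℕ => A ^ n * A) (SA * A) := hs.mul_right A
    have h2 : HasSum (fun n : ℕ => A ^ n * A) (SA - 1) := by
      refine htail.congr_fun fun n => ?_
      rw [pow_succ]
    exact h1.unique h2
  have hpow : ∀ n : ℕ, φ (B ^ n) = A ^ n := fun n => map_pow φ B n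
  have hentry : ∀ i j, HasSum (fun n : ℕ => (B ^ n) i j) (∑' n : ℕ, (B ^ n) i j) ∧
      SA i j = Complex.ofReal (∑' n : ℕ, (B ^ n) i j) := by
    intro i j
    let E : Matrix (Fin K) (Fin K) ℂ →ₗ[ℂ] ℂ :=
      { toFun := fun M => M i j, map_add' := fun _ _ => rfl, map_smul' := fun _ _ => rfl }
    have hEc : Continuous E := LinearMap.continuous_of_finiteDimensional E
    have hE : HasSum (fun n : ℕ => (A ^ n) i j) (SA i j) :=
      (hs.map (E.toAddMonoidHom) hEc)
    have heq : ∀ n : ℕ, (A ^ n) i j = Complex.ofReal ((B ^ n) i j) := by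
      intro n
      rw [← hpow n, hφ_apply, Matrix.map_apply]
    have hE' : HasSum (fun n : ℕ => (Complex.ofReal ((B ^ n) i j))) (SA i j) :=
      hE.congr_fun (fun n => (heq n).symm)
    have hsummable : Summable (fun n : ℕ => (B ^ n) i j) :=
      Complex.summable_ofReal.1 hE'.summable
    refine ⟨hsummable.hasSum, ?_⟩
    exact hE'.unique (Complex.hasSum_ofReal.2 hsummable.hasSum)
  set S : Matrix (Fin K) (Fin K) ℝ := Matrix.of (fun i j => ∑' n : ℕ, (B ^ n) i j) with hSdef
  have hmapS : φ S = SA := by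
    ext i j
    exact ((hentry i j).2).symm
  have hpow_nonneg : ∀ (n : ℕ) i j, 0 ≤ (B ^ n) i j := by
    intro n
    induction n with
    | zero => intro i j; by_cases h : i = j <;> simp [Matrix.one_apply, h]
    | succ n ih =>
        intro i j
        rw [pow_succ, Matrix.mul_apply]
        exact Finset.sum_nonneg fun k _ => mul_nonneg (ih i k) (hB k j)
  have hS_nonneg : ∀ i j, 0 ≤ S i j :=
    fun i j => tsum_nonneg fun n => hpow_nonneg n i j
  have hleft : (1 - B) * S = 1 := by
    apply hφinj
    simp only [_root_.map_mul, map_sub, _root_.map_one, hmapS]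
    rw [sub_mul, one_mul, hmulL, sub_sub_cancel]
  have hright : S * (1 - B) = 1 := by
    apply hφinj
    simp only [_root_.map_mul, map_sub, _root_.map_one, hmapS]
    rw [mul_sub, mul_one, hmulR, sub_sub_cancel]
  refine ⟨S, hleft, hright, hS_nonneg, ?_⟩
  apply hφinj
  simp only [map_add, _root_.map_mul, _root_.map_one, hmapS]
  rw [hmulL]
  abel

private lemma aux_specRad_root_lt {A : Matrix (Fin K) (Fin K) ℝ} (h : specRad A < 1) :
    ∀ z : ℂ, ((A.map Complex.ofReal).charpoly).IsRoot z → ‖z‖ < 1 := by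
  intro z hz
  set p := (A.map Complex.ofReal).charpoly with hp
  have hp0 : p ≠ 0 := (Matrix.charpoly_monic _).ne_zero
  have hfin : {r : ℝ | ∃ w : ℂ, p.IsRoot w ∧ r = ‖w‖}.Finite := by
    have himg : {r : ℝ | ∃ w : ℂ, p.IsRoot w ∧ r = ‖w‖}
        = (fun w : ℂ => ‖w‖) '' {w : ℂ | p.IsRoot w} := by
      ext r
      simp only [Set.mem_setOf_eq, Set.mem_image]
      constructor
      · rintro ⟨w, hw, rfl⟩; exact ⟨w, hw, rfl⟩
      · rintro ⟨w, hw, rfl⟩; exact ⟨w, hw, rfl⟩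
    rw [himg]
    exact (p.finite_setOf_isRoot hp0).image _
  have hle : ‖z‖ ≤ specRad A := le_csSup hfin.bddAbove ⟨z, hz, rfl⟩
  exact lt_of_le_of_lt hle h

end AuxNeumann

section AuxFluid
open Topology

variable {K : ℕ}

private lemma aux_G_det (fd : FluidData K) : IsUnit fd.G.det := by
  rw [FluidData.G, Matrix.det_diagonal]
  exact isUnit_iff_ne_zero.2 (Finset.prod_ne_zero_iff.2 fun i _ => (fd.μ_pos i).ne')

private lemma aux_G_inv (fd : FluidData K) :
    fd.G⁻¹ = Matrix.diagonal (fun i => (fd.μ i)⁻¹) := by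
  apply Matrix.inv_eq_right_inv
  rw [FluidData.G, Matrix.diagonal_mul_diagonal]
  ext i j
  by_cases hij : i = j
  · subst hij; simp [mul_inv_cancel₀ (fd.μ_pos i).ne']
  · simp [Matrix.diagonal_apply_ne _ hij, Matrix.one_apply_ne hij]

private lemma aux_H_eq (fd : FluidData K) :
    fd.H = fd.Λ * Matrix.diagonal (fun i => (fd.μ i)⁻¹) := by
  have h1 : fd.G * fd.M = fd.Λ := by
    rw [FluidData.M, ← Matrix.mul_assoc, Matrix.mul_nonsing_inv _ (aux_G_det fd), Matrix.one_mul]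
  rw [FluidData.H, h1, aux_G_inv]

private lemma aux_Ht_nonneg (fd : FluidData K) : ∀ i j, 0 ≤ fd.H.transpose i j := by
  intro i j
  rw [Matrix.transpose_apply, aux_H_eq, Matrix.mul_diagonal]
  exact mul_nonneg (fd.Λ_nonneg j i) (inv_nonneg.2 (fd.μ_pos i).le)

private lemma aux_conj (fd : FluidData K) :
    fd.G⁻¹ * (fd.M.transpose - 1) * fd.G = fd.H.transpose - 1 := by
  have hHt : fd.H.transpose = fd.G⁻¹ * fd.M.transpose * fd.G := by
    rw [FluidData.H, Matrix.transpose_mul, Matrix.transpose_mul]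
    rw [aux_G_inv]
    rw [show fd.G = Matrix.diagonal fd.μ from rfl]
    rw [Matrix.diagonal_transpose, Matrix.diagonal_transpose, Matrix.mul_assoc]
  rw [Matrix.mul_sub, Matrix.mul_one, Matrix.sub_mul, hHt,
    Matrix.nonsing_inv_mul _ (aux_G_det fd)]

private lemma aux_root_iff (fd : FluidData K) (z : ℂ) :
    ((fd.H.transpose.map Complex.ofReal).charpoly).IsRoot z ↔
      ((fd.M.map Complex.ofReal).charpoly).IsRoot z := by
  classical
  set φ : Matrix (Fin K) (Fin K) ℝ →+* Matrix (Fin K) (Fin K) ℂ :=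
    (Complex.ofRealHom.mapMatrix) with hφ
  have hφ_apply : ∀ X : Matrix (Fin K) (Fin K) ℝ, φ X = X.map Complex.ofReal := fun X => rfl
  set D : Matrix (Fin K) (Fin K) ℂ := Matrix.diagonal (fun i => (fd.μ i : ℂ)) with hD
  set D' : Matrix (Fin K) (Fin K) ℂ := Matrix.diagonal (fun i => ((fd.μ i : ℂ))⁻¹) with hD'
  set Mc : Matrix (Fin K) (Fin K) ℂ := fd.M.map Complex.ofReal with hMc
  have hμ : ∀ i, (fd.μ i : ℂ) ≠ 0 := fun i => Complex.ofReal_ne_zero.2 (fd.μ_pos i).ne'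
  have hDD' : D * D' = 1 := by
    rw [hD, hD', Matrix.diagonal_mul_diagonal]
    ext i j
    by_cases hij : i = j
    · subst hij; simp [mul_inv_cancel₀ (hμ i)]
    · simp [Matrix.diagonal_apply_ne _ hij, Matrix.one_apply_ne hij]
  have hmapG : φ fd.G = D := by
    ext i j
    by_cases hij : i = j
    · subst hij
      simp [hφ_apply, Matrix.map_apply, FluidData.G, hD]
    · simp [hφ_apply, Matrix.map_apply, FluidData.G, hD,
        Matrix.diagonal_apply_ne _ hij]
  have hmapGinv : φ fd.G⁻¹ = D' := by
    rw [aux_G_inv]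
    ext i j
    by_cases hij : i = j
    · subst hij
      simp [hφ_apply, Matrix.map_apply, hD']
    · simp [hφ_apply, Matrix.map_apply, hD', Matrix.diagonal_apply_ne _ hij]
  have hmapH : fd.H.map Complex.ofReal = D * Mc * D' := by
    rw [← hφ_apply, show fd.H = fd.G * fd.M * fd.G⁻¹ from rfl,
      _root_.map_mul, _root_.map_mul, hmapG, hmapGinv, hφ_apply]
  have hmapHt : fd.H.transpose.map Complex.ofReal = (D * Mc * D')ᵀ := by
    rw [Matrix.transpose_map, hmapH]
  have key : (z • (1 : Matrix (Fin K) (Fin K) ℂ) - (D * Mc * D')ᵀ).det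
      = (z • (1 : Matrix (Fin K) (Fin K) ℂ) - Mc).det := by
    have h1 : z • (1 : Matrix (Fin K) (Fin K) ℂ) - (D * Mc * D')ᵀ
        = (z • (1 : Matrix (Fin K) (Fin K) ℂ) - D * Mc * D')ᵀ := by
      rw [Matrix.transpose_sub, Matrix.transpose_smul, Matrix.transpose_one]
    rw [h1, Matrix.det_transpose]
    have h2 : z • (1 : Matrix (Fin K) (Fin K) ℂ) - D * Mc * D'
        = D * (z • (1 : Matrix (Fin K) (Fin K) ℂ) - Mc) * D' := by
      rw [Matrix.mul_sub, Matrix.sub_mul]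
      congr 1
      rw [Matrix.mul_smul, Matrix.mul_one, Matrix.smul_mul, hDD']
    rw [h2, Matrix.det_mul, Matrix.det_mul]
    have h3 : D.det * D'.det = 1 := by rw [← Matrix.det_mul, hDD', Matrix.det_one]
    calc D.det * (z • (1 : Matrix (Fin K) (Fin K) ℂ) - Mc).det * D'.det
        = (D.det * D'.det) * (z • (1 : Matrix (Fin K) (Fin K) ℂ) - Mc).det := by ring
      _ = (z • (1 : Matrix (Fin K) (Fin K) ℂ) - Mc).det := by rw [h3, one_mul]
  constructor
  · intro h
    rw [Polynomial.IsRoot, aux_eval_charpoly] at h ⊢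
    rw [hmapHt, key] at h
    exact h
  · intro h
    rw [Polynomial.IsRoot, aux_eval_charpoly] at h ⊢
    rw [hmapHt, key]
    exact h

end AuxFluid

section MainProof
open Topology

/-- If `ρ(M) < 1` then the fluid model is globally stable with draining
time `eᵀ (I - Hᵀ)⁻¹ G⁻¹ Q 0`: every fluid model solution satisfies `Q t = 0` for all
`t ≥ eᵀ (I - Hᵀ)⁻¹ G⁻¹ Q 0`. -/
theorem stmt1 {K : ℕ} (hK : 1 ≤ K) (fd : FluidData K)
    (hρ : specRad fd.M < 1) (sol : FluidSol fd) :
    ∀ t : ℝ,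
      (fun _ => (1 : ℝ)) ⬝ᵥ ((1 - fd.H.transpose)⁻¹ *ᵥ (fd.G⁻¹ *ᵥ sol.Q 0)) ≤ t →
      sol.Q t = 0 := by
  classical
  have hroot : ∀ z : ℂ, ((fd.H.transpose.map Complex.ofReal).charpoly).IsRoot z →
      ‖z‖ < 1 := fun z hz => aux_specRad_root_lt hρ z ((aux_root_iff fd z).1 hz)
  obtain ⟨S, hleft, hright, hSnn, hSrec⟩ :=
    aux_neumann_exists hK fd.H.transpose (aux_Ht_nonneg fd) hroot
  have hPS : (1 - fd.H.transpose)⁻¹ = S := Matrix.inv_eq_right_inv hleft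
  set Fq : ℝ → Fin K → ℝ := fun u =>
    sol.Q 0 + (fd.M.transpose - 1) *ᵥ (fd.G *ᵥ sol.T u) + (u - ∑ i, sol.T u i) • fd.lam0
    with hFq
  set e : Fin K → ℝ := fun _ => 1 with he
  set f : ℝ → ℝ := fun u => e ⬝ᵥ (S *ᵥ (fd.G⁻¹ *ᵥ sol.Q u)) with hf
  set c : ℝ := e ⬝ᵥ (S *ᵥ (fd.G⁻¹ *ᵥ fd.lam0)) with hc
  -- lower bound for quadratic form
  have hge : ∀ w : Fin K → ℝ, (∀ j, 0 ≤ w j) → ∑ j, w j ≤ e ⬝ᵥ (S *ᵥ w) := by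
    intro w hw
    have hBSnn : ∀ i j, 0 ≤ (fd.H.transpose * S) i j := by
      intro i j; rw [Matrix.mul_apply]
      exact Finset.sum_nonneg fun k _ => mul_nonneg (aux_Ht_nonneg fd i k) (hSnn k j)
    have hdiag : ∀ j, 1 ≤ S j j := by
      intro j
      have h1 : S j j = ((1 : Matrix (Fin K) (Fin K) ℝ) + fd.H.transpose * S) j j := by
        conv_lhs => rw [hSrec]
      have h2 : ((1 : Matrix (Fin K) (Fin K) ℝ) + fd.H.transpose * S) j j
          = 1 + (fd.H.transpose * S) j j := by
        simp [Matrix.add_apply, Matrix.one_apply_eq]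
      rw [h1, h2]
      linarith [hBSnn j j]
    calc ∑ j, w j ≤ ∑ j, ∑ i, S i j * w j := by
          apply Finset.sum_le_sum
          intro j _
          calc w j = 1 * w j := (one_mul _).symm
            _ ≤ S j j * w j := mul_le_mul_of_nonneg_right (hdiag j) (hw j)
            _ ≤ ∑ i, S i j * w j :=
                Finset.single_le_sum (fun i _ => mul_nonneg (hSnn i j) (hw j))
                  (Finset.mem_univ j)
      _ = ∑ i, ∑ j, S i j * w j := Finset.sum_comm
      _ = e ⬝ᵥ (S *ᵥ w) := by
          simp [dotProduct, Matrix.mulVec, he]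
  have hGinv : ∀ v : Fin K → ℝ, ∀ j, (fd.G⁻¹ *ᵥ v) j = (fd.μ j)⁻¹ * v j := by
    intro v j
    rw [aux_G_inv]
    simp [Matrix.mulVec_diagonal]
  -- positivity
  have hfpos : ∀ u : ℝ, 0 ≤ u → sol.Q u ≠ 0 → 0 < f u := by
    intro u hu hne
    obtain ⟨j, hj⟩ := Function.ne_iff.1 hne
    have hQj : 0 < sol.Q u j :=
      lt_of_le_of_ne (sol.Q_nonneg u hu j) (Ne.symm (by simpa using hj))
    have hwnn : ∀ i, 0 ≤ (fd.G⁻¹ *ᵥ sol.Q u) i := by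
      intro i; rw [hGinv]
      exact mul_nonneg (inv_nonneg.2 (fd.μ_pos i).le) (sol.Q_nonneg u hu i)
    have hwj : 0 < (fd.G⁻¹ *ᵥ sol.Q u) j := by
      rw [hGinv]
      exact mul_pos (inv_pos.2 (fd.μ_pos j)) hQj
    calc (0:ℝ) < (fd.G⁻¹ *ᵥ sol.Q u) j := hwj
      _ ≤ ∑ i, (fd.G⁻¹ *ᵥ sol.Q u) i :=
          Finset.single_le_sum (fun i _ => hwnn i) (Finset.mem_univ j)
      _ ≤ e ⬝ᵥ (S *ᵥ (fd.G⁻¹ *ᵥ sol.Q u)) := hge _ hwnn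
  have hf0nn : 0 ≤ f 0 := by
    have hwnn : ∀ i, 0 ≤ (fd.G⁻¹ *ᵥ sol.Q 0) i := by
      intro i; rw [hGinv]
      exact mul_nonneg (inv_nonneg.2 (fd.μ_pos i).le) (sol.Q_nonneg 0 le_rfl i)
    exact le_trans (Finset.sum_nonneg fun j _ => hwnn j) (hge _ hwnn)
  -- key Lyapunov identity
  have hkey : ∀ u : ℝ, 0 ≤ u →
      f u = f 0 - u + (u - ∑ i, sol.T u i) * (1 + c) := by
    intro u hu
    have hvec : S *ᵥ (fd.G⁻¹ *ᵥ sol.Q u)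
        = S *ᵥ (fd.G⁻¹ *ᵥ sol.Q 0) - sol.T u
          + (u - ∑ i, sol.T u i) • (S *ᵥ (fd.G⁻¹ *ᵥ fd.lam0)) := by
      have hmid : fd.G⁻¹ *ᵥ ((fd.M.transpose - 1) *ᵥ (fd.G *ᵥ sol.T u))
          = (fd.H.transpose - 1) *ᵥ sol.T u := by
        rw [Matrix.mulVec_mulVec, Matrix.mulVec_mulVec, aux_conj fd]
      have hmid2 : S *ᵥ ((fd.H.transpose - 1) *ᵥ sol.T u) = -(sol.T u) := by
        rw [Matrix.mulVec_mulVec]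
        have hneg : S * (fd.H.transpose - 1) = -1 := by
          calc S * (fd.H.transpose - 1) = -(S * (1 - fd.H.transpose)) := by
                rw [Matrix.mul_sub, Matrix.mul_sub, Matrix.mul_one]; abel
            _ = -1 := by rw [hright]
        rw [hneg, Matrix.neg_mulVec, Matrix.one_mulVec]
      rw [sol.dynamics u hu]
      simp only [Matrix.mulVec_add, Matrix.mulVec_smul]
      rw [hmid, hmid2]
      abel
    have hfu : f u = e ⬝ᵥ (S *ᵥ (fd.G⁻¹ *ᵥ sol.Q u)) := rfl
    rw [hfu, hvec, dotProduct_add, dotProduct_sub, dotProduct_smul]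
    have hT : e ⬝ᵥ sol.T u = ∑ i, sol.T u i := by
      simp [dotProduct, he]
    rw [hT, smul_eq_mul]
    rw [hf, hc]
    ring
  -- continuity data
  have hTc : ∀ i, Continuous fun u => sol.T u i := fun i => (sol.T_lip i).choose_spec.continuous
  have hYc : Continuous (fun u : ℝ => u - ∑ i, sol.T u i) :=
    continuous_id.sub (continuous_finset_sum _ fun i _ => hTc i)
  have hFqc : Continuous Fq := by
    apply Continuous.add
    · apply Continuous.add continuous_const
      have hlin : (fun v : Fin K → ℝ => (fd.M.transpose - 1) *ᵥ (fd.G *ᵥ v))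
          = fun v => ((fd.M.transpose - 1) * fd.G).mulVecLin v := by
        funext v
        rw [Matrix.mulVecLin_apply, Matrix.mulVec_mulVec]
      have hL : Continuous fun v : Fin K → ℝ => (fd.M.transpose - 1) *ᵥ (fd.G *ᵥ v) := by
        rw [hlin]
        exact LinearMap.continuous_of_finiteDimensional _
      exact hL.comp (continuous_pi hTc)
    · exact hYc.smul continuous_const
  have hQF : ∀ u : ℝ, 0 ≤ u → sol.Q u = Fq u := fun u hu => sol.dynamics u hu
  -- main argument
  intro t ht
  rw [hPS] at ht
  have ht' : f 0 ≤ t := ht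
  have ht0 : 0 ≤ t := le_trans hf0nn ht'
  by_contra hQt
  have hft : 0 < f t := hfpos t ht0 hQt
  set Z : Set ℝ := {u | u ∈ Set.Icc 0 t ∧ Fq u = 0} with hZ
  have hZcl : IsClosed Z := by
    have hZeq : Z = Set.Icc 0 t ∩ Fq ⁻¹' {0} := by
      ext u; simp [hZ, Set.mem_inter_iff]
    rw [hZeq]
    exact isClosed_Icc.inter (isClosed_singleton.preimage hFqc)
  have hZcpt : IsCompact Z := isCompact_Icc.of_isClosed_subset hZcl (fun u hu => hu.1)
  by_cases hZne : Z.Nonempty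
  · set s := sSup Z with hs
    have hsZ : s ∈ Z := hZcpt.sSup_mem hZne
    obtain ⟨⟨hs0, hst⟩, hFs⟩ := hsZ
    have hQs : sol.Q s = 0 := by rw [hQF s hs0]; exact hFs
    have hslt : s < t := lt_of_le_of_ne hst (fun h => hQt (h ▸ hQs))
    have hnz : ∀ u ∈ Set.Ioc s t, sol.Q u ≠ 0 := by
      intro u hu hne
      have huZ : u ∈ Z :=
        ⟨⟨hs0.trans hu.1.le, hu.2⟩, by rw [← hQF u (hs0.trans hu.1.le)]; exact hne⟩
      exact absurd (le_csSup hZcpt.bddAbove huZ) (not_le.2 hu.1)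
    have hYconst : ∀ u ∈ Set.Ioc s t,
        (u - ∑ i, sol.T u i) = (t - ∑ i, sol.T t i) := by
      intro u hu
      exact sol.nonidling u t (hs0.trans hu.1.le) hu.2
        (fun v hv => hnz v ⟨lt_of_lt_of_le hu.1 hv.1, hv.2⟩)
    have hYs : (s - ∑ i, sol.T s i) = (t - ∑ i, sol.T t i) := by
      have hne : (𝓝[Set.Ioc s t] s).NeBot := by
        rw [← mem_closure_iff_nhdsWithin_neBot, closure_Ioc hslt.ne]
        exact Set.left_mem_Icc.2 hslt.le
      have h1 : Filter.Tendsto (fun u : ℝ => u - ∑ i, sol.T u i) (𝓝[Set.Ioc s t] s)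
          (𝓝 (s - ∑ i, sol.T s i)) := (hYc.tendsto s).mono_left nhdsWithin_le_nhds
      have h2 : Filter.Tendsto (fun u : ℝ => u - ∑ i, sol.T u i) (𝓝[Set.Ioc s t] s)
          (𝓝 (t - ∑ i, sol.T t i)) := by
        refine Filter.Tendsto.congr' ?_ tendsto_const_nhds
        filter_upwards [eventually_mem_nhdsWithin] with u hu
        exact (hYconst u hu).symm
      exact tendsto_nhds_unique h1 h2
    have hfs : f s = 0 := by
      have hfs1 : f s = e ⬝ᵥ (S *ᵥ (fd.G⁻¹ *ᵥ sol.Q s)) := rfl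
      rw [hfs1, hQs]
      simp
    have h1 := hkey t ht0
    have h2 := hkey s hs0
    rw [hYs] at h2
    have : f t = s - t := by linarith
    linarith
  · have hall : ∀ u ∈ Set.Icc 0 t, sol.Q u ≠ 0 := by
      intro u hu hne
      exact hZne ⟨u, hu, by rw [← hQF u hu.1]; exact hne⟩
    have hY0t := sol.nonidling 0 t le_rfl ht0 hall
    have hY0 : (0:ℝ) - ∑ i, sol.T 0 i = 0 := by simp [sol.T_zero]
    have h1 := hkey t ht0
    rw [← hY0t, hY0] at h1
    linarith

end MainProof
end

section
/- Suppose ρ(M) > 1 and each row of M has at least one strictly positive entry. Then the fluid model is weakly unstable: for every fluid model solution with Q(0) = 0 and every t > 0 at which every class has received strictly positive cumulative service (i.e., T_i(t) > 0 for all i = 1,…,K), one has Q(t) ≠ 0. -/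
open Matrix MeasureTheory Filter Set

section AuxPF

open Polynomial in
private lemma charpoly_root_eigen' {K : ℕ} (A : Matrix (Fin K) (Fin K) ℂ) {z : ℂ}
    (hz : A.charpoly.IsRoot z) : ∃ v : Fin K → ℂ, v ≠ 0 ∧ A.mulVec v = z • v := by
  have h1 : (Matrix.diagonal (fun _ : Fin K => z) - A).det = 0 := by
    have h0 : Polynomial.eval z A.charpoly
        = ((charmatrix A).map (Polynomial.evalRingHom z)).det := by
      rw [Matrix.charpoly, ← RingHom.mapMatrix_apply, ← RingHom.map_det]
      rfl
    have h2 : (charmatrix A).map (Polynomial.evalRingHom z)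
        = Matrix.diagonal (fun _ : Fin K => z) - A := by
      ext i j
      by_cases h : i = j <;>
        simp [Matrix.map_apply, h, charmatrix_apply_eq, charmatrix_apply_ne,
          Matrix.sub_apply, Matrix.diagonal_apply]
    rw [← h2, ← h0]
    exact hz
  obtain ⟨v, hv0, hv⟩ := (Matrix.exists_mulVec_eq_zero_iff).mpr h1
  refine ⟨v, hv0, ?_⟩
  rw [Matrix.sub_mulVec] at hv
  have hd : (Matrix.diagonal (fun _ : Fin K => z)).mulVec v = z • v := by
    ext i; simp [Matrix.mulVec_diagonal]
  rw [hd] at hv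
  exact (sub_eq_zero.mp hv).symm

open Polynomial in
private lemma exists_subinvariant' {K : ℕ} (M : Matrix (Fin K) (Fin K) ℝ)
    (hM : ∀ i j, 0 ≤ M i j) {z : ℂ}
    (hz : (M.map Complex.ofReal).charpoly.IsRoot z) :
    ∃ u : Fin K → ℝ, (∀ i, 0 ≤ u i) ∧ u ≠ 0 ∧
      ∀ i, ‖z‖ * u i ≤ ∑ j, M i j * u j := by
  obtain ⟨v, hv0, hv⟩ := charpoly_root_eigen' (M.map Complex.ofReal) hz
  refine ⟨fun i => ‖v i‖, fun i => norm_nonneg _, ?_, ?_⟩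
  · intro h
    apply hv0
    ext i
    have := congrFun h i
    simpa using this
  · intro i
    have h1 : z * v i = ∑ j, (M i j : ℂ) * v j := by
      have h := congrFun hv i
      simpa [Matrix.mulVec, dotProduct, Matrix.map_apply, mul_comm] using h.symm
    calc ‖z‖ * ‖v i‖
        = ‖z * v i‖ := (norm_mul _ _).symm
      _ = ‖∑ j, (M i j : ℂ) * v j‖ := by rw [h1]
      _ ≤ ∑ j, ‖(M i j : ℂ) * v j‖ := norm_sum_le _ _
      _ = ∑ j, M i j * ‖v j‖ := by
          refine Finset.sum_congr rfl fun j _ => ?_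
          rw [norm_mul, Complex.norm_real, Real.norm_of_nonneg (hM i j)]

private lemma M_nonneg' {K : ℕ} (fd : FluidData K) : ∀ i j, 0 ≤ fd.M i j := by
  intro i j
  have hG : fd.G⁻¹ = Matrix.diagonal (fun i => (fd.μ i)⁻¹) := by
    apply Matrix.inv_eq_right_inv
    rw [FluidData.G, Matrix.diagonal_mul_diagonal]
    rw [show (fun i => fd.μ i * (fd.μ i)⁻¹) = fun _ => (1:ℝ) from
      funext fun i => mul_inv_cancel₀ (fd.μ_pos i).ne', Matrix.diagonal_one]
  rw [FluidData.M, hG, Matrix.diagonal_mul]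
  exact mul_nonneg (inv_nonneg.mpr (fd.μ_pos i).le) (fd.Λ_nonneg i j)

end AuxPF

/-- If `ρ(M) > 1` and each row of `M` has at least one strictly positive
entry, then the fluid model is weakly unstable: for every fluid model solution starting
empty (`Q 0 = 0`) and every `t > 0` at which every class has received strictly positive
cumulative service, one has `Q t ≠ 0`. -/
theorem stmt3 {K : ℕ} (hK : 1 ≤ K) (fd : FluidData K)
    (hρ : 1 < specRad fd.M)
    (hrow : ∀ i, ∃ j, 0 < fd.M i j)
    (sol : FluidSol fd) (h0 : sol.Q 0 = 0) :
    ∀ t : ℝ, 0 < t → (∀ i, 0 < sol.T t i) → sol.Q t ≠ 0 := by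
  intro t ht hT hQ
  obtain ⟨r, ⟨z, hz, rfl⟩, hr⟩ :
      ∃ r ∈ {r : ℝ | ∃ z : ℂ, ((fd.M).map Complex.ofReal).charpoly.IsRoot z ∧
        r = ‖z‖}, 1 < r := by
    by_contra h
    push_neg at h
    exact absurd hρ (not_lt.mpr (Real.sSup_le (fun x hx => h x hx) zero_le_one))
  obtain ⟨u, hu0, hune, hukey⟩ := exists_subinvariant' fd.M (M_nonneg' fd) hz
  set w : Fin K → ℝ := fun j => fd.μ j * sol.T t j with hw
  have hwpos : ∀ j, 0 < w j := fun j => mul_pos (fd.μ_pos j) (hT j)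
  have hGw : fd.G *ᵥ sol.T t = w := by
    ext j; simp [FluidData.G, Matrix.mulVec_diagonal, hw]
  have hY : 0 ≤ t - ∑ i, sol.T t i := by
    have := sol.Y_mono (Set.self_mem_Ici) (Set.mem_Ici.mpr ht.le) ht.le
    simpa [sol.T_zero] using this
  have hdyn := sol.dynamics t ht.le
  rw [h0, hQ, hGw] at hdyn
  set Y : ℝ := t - ∑ i, sol.T t i with hYdef
  have h1 : ∀ j, (0:ℝ) = ((fd.M.transpose *ᵥ w) j - w j) + Y * fd.lam0 j := by
    intro j
    rw [Matrix.sub_mulVec, Matrix.one_mulVec] at hdyn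
    have := congrFun hdyn j
    simpa [Pi.add_apply, Pi.sub_apply, Pi.smul_apply, smul_eq_mul] using this
  have key : (0:ℝ)
      = ∑ j, u j * (((fd.M.transpose *ᵥ w) j - w j) + Y * fd.lam0 j) := by
    calc (0:ℝ) = ∑ j : Fin K, u j * 0 := by simp
      _ = _ := Finset.sum_congr rfl fun j _ => by rw [← h1 j]
  have hexpand : ∑ j, u j * (((fd.M.transpose *ᵥ w) j - w j) + Y * fd.lam0 j)
      = (∑ j, u j * (fd.M.transpose *ᵥ w) j) - (∑ j, u j * w j)
        + Y * ∑ j, u j * fd.lam0 j := by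
    rw [Finset.mul_sum, ← Finset.sum_sub_distrib, ← Finset.sum_add_distrib]
    exact Finset.sum_congr rfl fun j _ => by ring
  have hswap : ∑ j, u j * (fd.M.transpose *ᵥ w) j = ∑ k, w k * (fd.M *ᵥ u) k := by
    simp only [Matrix.mulVec, dotProduct, Matrix.transpose_apply, Finset.mul_sum]
    rw [Finset.sum_comm]
    exact Finset.sum_congr rfl fun k _ => Finset.sum_congr rfl fun j _ => by ring
  have hMu : ∀ k, ‖z‖ * u k ≤ (fd.M *ᵥ u) k := by
    intro k
    simpa [Matrix.mulVec, dotProduct] using hukey k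
  -- positivity of ∑ w k * u k
  obtain ⟨k0, hk0⟩ := Function.ne_iff.mp hune
  have hupos : 0 < u k0 := lt_of_le_of_ne (hu0 k0) (Ne.symm (by simpa using hk0))
  have hsumpos : 0 < ∑ k, w k * u k := by
    refine Finset.sum_pos' (fun k _ => mul_nonneg (hwpos k).le (hu0 k)) ?_
    exact ⟨k0, Finset.mem_univ k0, mul_pos (hwpos k0) hupos⟩
  have hA : ∑ k, w k * (‖z‖ * u k) ≤ ∑ k, w k * (fd.M *ᵥ u) k :=
    Finset.sum_le_sum fun k _ => mul_le_mul_of_nonneg_left (hMu k) (hwpos k).le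
  have hC : 0 ≤ Y * ∑ j, u j * fd.lam0 j :=
    mul_nonneg hY (Finset.sum_nonneg fun j _ =>
      mul_nonneg (hu0 j) (fd.lam0_nonneg j))
  have hfin : (0:ℝ) < ∑ j, u j * (((fd.M.transpose *ᵥ w) j - w j) + Y * fd.lam0 j) := by
    rw [hexpand, hswap]
    have h2 : (‖z‖ - 1) * ∑ k, w k * u k
        ≤ (∑ k, w k * (fd.M *ᵥ u) k) - ∑ j, u j * w j := by
      have : ∑ j, u j * w j = ∑ k, w k * u k :=
        Finset.sum_congr rfl fun j _ => mul_comm _ _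
      rw [this]
      calc (‖z‖ - 1) * ∑ k, w k * u k
          = (∑ k, w k * (‖z‖ * u k)) - ∑ k, w k * u k := by
            rw [sub_mul, one_mul, Finset.mul_sum]
            congr 1
            exact Finset.sum_congr rfl fun k _ => by ring
        _ ≤ _ := by linarith [hA]
    have h3 : 0 < (‖z‖ - 1) * ∑ k, w k * u k :=
      mul_pos (by linarith) hsumpos
    linarith
  exact absurd key (ne_of_lt hfin)
end

section
/- Fix θ ≥ 0. Define the iteration g⁽⁰⁾_i = ψ_i(θ + λ̄_i) and g⁽ⁿ⁺¹⁾_i = ψ_i(θ + λ̄_i − ∑_{j=1}^K λ_{ij} g⁽ⁿ⁾_j) for i = 1,…,K. Then: (a) 0 ≤ g⁽ⁿ⁾_i ≤ g⁽ⁿ⁺¹⁾_i ≤ 1 for all n and i; (b) the pointwise limit g*_i = lim_{n→∞} g⁽ⁿ⁾_i exists and satisfies the fixed-point system g*_i = ψ_i(θ + λ̄_i − ∑_{j=1}^K λ_{ij} g*_j) for all i; and (c) g* is the minimal such solution: for every vector g̃ ∈ [0,1]^K satisfying g̃_i = ψ_i(θ + λ̄_i − ∑_{j=1}^K λ_{ij}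 g̃_j) for all i, one has g*_i ≤ g̃_i for all i. -/
open MeasureTheory Filter

/-- The Laplace–Stieltjes transform `ψ(s) = ∫ e^{-s t} dF(t)` of a measure `F` on `ℝ`. -/
noncomputable def LST (F : Measure ℝ) (s : ℝ) : ℝ :=
  ∫ t, Real.exp (-s * t) ∂F

lemma lst_ae_nonneg (F : Measure ℝ) (hF : F (Set.Iio 0) = 0) : ∀ᵐ t ∂F, 0 ≤ t := by
  rw [ae_iff]
  simpa [Set.Iio, not_le] using hF

lemma lst_integrable (F : Measure ℝ) [IsProbabilityMeasure F] (hF : F (Set.Iio 0) = 0)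
    {s : ℝ} (hs : 0 ≤ s) : Integrable (fun t => Real.exp (-s * t)) F := by
  refine (integrable_const (1:ℝ)).mono' ?_ ?_
  · exact (Real.continuous_exp.comp (continuous_const.mul continuous_id)).aestronglyMeasurable
  · filter_upwards [lst_ae_nonneg F hF] with t ht
    rw [Real.norm_eq_abs, abs_of_nonneg (Real.exp_nonneg _)]
    rw [Real.exp_le_one_iff]
    nlinarith

lemma lst_nonneg (F : Measure ℝ) (s : ℝ) : 0 ≤ LST F s :=
  integral_nonneg fun _ => (Real.exp_nonneg _)

lemma lst_le_one (F : Measure ℝ) [IsProbabilityMeasure F] (hF : F (Set.Iio 0) = 0)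
    {s : ℝ} (hs : 0 ≤ s) : LST F s ≤ 1 := by
  have := integral_mono_ae (lst_integrable F hF hs) (integrable_const (1:ℝ)) ?_
  · simpa [LST] using this
  · filter_upwards [lst_ae_nonneg F hF] with t ht
    rw [Real.exp_le_one_iff]; nlinarith

lemma lst_anti (F : Measure ℝ) [IsProbabilityMeasure F] (hF : F (Set.Iio 0) = 0)
    {s s' : ℝ} (hs : 0 ≤ s) (hss' : s ≤ s') : LST F s' ≤ LST F s := by
  refine integral_mono_ae (lst_integrable F hF (hs.trans hss')) (lst_integrable F hF hs) ?_
  filter_upwards [lst_ae_nonneg F hF] with t ht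
  exact Real.exp_le_exp.2 (by nlinarith)

/-- Fix `θ ≥ 0`, nonnegative rates `λᵢⱼ` with row sums `λ̄ᵢ`, and
probability measures `F₁, …, F_K` on `[0,∞)` with LSTs `ψᵢ`. Define the iteration
`g⁽⁰⁾ᵢ = ψᵢ(θ + λ̄ᵢ)` and `g⁽ⁿ⁺¹⁾ᵢ = ψᵢ(θ + λ̄ᵢ - ∑ⱼ λᵢⱼ g⁽ⁿ⁾ⱼ)`. Then:
(a) `0 ≤ g⁽ⁿ⁾ᵢ ≤ g⁽ⁿ⁺¹⁾ᵢ ≤ 1` for all `n, i`;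
(b) the pointwise limit `g*` exists and solves the fixed-point system
`g*ᵢ = ψᵢ(θ + λ̄ᵢ - ∑ⱼ λᵢⱼ g*ⱼ)`;
(c) `g*` is the minimal solution of this system with values in `[0,1]`. -/
theorem stmt8 {K : ℕ} (hK : 1 ≤ K)
    (lam : Fin K → Fin K → ℝ) (hlam : ∀ i j, 0 ≤ lam i j)
    (F : Fin K → Measure ℝ) (hFprob : ∀ i, IsProbabilityMeasure (F i))
    (hFsupp : ∀ i, F i (Set.Iio 0) = 0)
    (θ : ℝ) (hθ : 0 ≤ θ)
    (g : ℕ → Fin K → ℝ)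
    (hg0 : ∀ i, g 0 i = LST (F i) (θ + ∑ j, lam i j))
    (hgrec : ∀ n i, g (n + 1) i = LST (F i) (θ + ∑ j, lam i j - ∑ j, lam i j * g n j)) :
    (∀ n i, 0 ≤ g n i ∧ g n i ≤ g (n + 1) i ∧ g (n + 1) i ≤ 1) ∧
    ∃ gstar : Fin K → ℝ,
      (∀ i, Tendsto (fun n => g n i) atTop (nhds (gstar i))) ∧
      (∀ i, gstar i = LST (F i) (θ + ∑ j, lam i j - ∑ j, lam i j * gstar j)) ∧
      (∀ gt : Fin K → ℝ, (∀ i, 0 ≤ gt i ∧ gt i ≤ 1) →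
        (∀ i, gt i = LST (F i) (θ + ∑ j, lam i j - ∑ j, lam i j * gt j)) →
        ∀ i, gstar i ≤ gt i) := by
  haveI := hFprob
  -- nonnegativity of the argument of the LST
  have harg : ∀ (h : Fin K → ℝ), (∀ j, 0 ≤ h j ∧ h j ≤ 1) → ∀ i,
      0 ≤ θ + ∑ j, lam i j - ∑ j, lam i j * h j := by
    intro h hh i
    have hsum : ∑ j, lam i j * h j ≤ ∑ j, lam i j :=
      Finset.sum_le_sum fun j _ => by nlinarith [hlam i j, (hh j).1, (hh j).2]
    linarith
  -- bounds
  have hbd : ∀ n i, 0 ≤ g n i ∧ g n i ≤ 1 := by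
    intro n
    induction n with
    | zero =>
      intro i
      have hs : 0 ≤ θ + ∑ j, lam i j := by
        have : (0:ℝ) ≤ ∑ j, lam i j := Finset.sum_nonneg fun j _ => hlam i j
        linarith
      rw [hg0 i]
      exact ⟨lst_nonneg _ _, lst_le_one _ (hFsupp i) hs⟩
    | succ n ih =>
      intro i
      rw [hgrec n i]
      exact ⟨lst_nonneg _ _, lst_le_one _ (hFsupp i) (harg _ ih i)⟩
  -- monotonicity
  have hmono : ∀ n i, g n i ≤ g (n + 1) i := by
    intro n
    induction n with
    | zero =>
      intro i
      rw [hg0 i, hgrec 0 i]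
      refine lst_anti _ (hFsupp i) (harg _ (hbd 0) i) ?_
      have : 0 ≤ ∑ j, lam i j * g 0 j :=
        Finset.sum_nonneg fun j _ => mul_nonneg (hlam i j) (hbd 0 j).1
      linarith
    | succ n ih =>
      intro i
      rw [hgrec n i, hgrec (n + 1) i]
      refine lst_anti _ (hFsupp i) (harg _ (hbd (n + 1)) i) ?_
      have : ∑ j, lam i j * g n j ≤ ∑ j, lam i j * g (n + 1) j :=
        Finset.sum_le_sum fun j _ => mul_le_mul_of_nonneg_left (ih j) (hlam i j)
      linarith
  refine ⟨fun n i => ⟨(hbd n i).1, hmono n i, (hbd (n + 1) i).2⟩, ?_⟩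
  -- the limit
  have hmono' : ∀ i, Monotone fun n => g n i := fun i =>
    monotone_nat_of_le_succ fun n => hmono n i
  have hbdd : ∀ i, BddAbove (Set.range fun n => g n i) := by
    intro i
    refine ⟨1, ?_⟩
    rintro x ⟨n, rfl⟩
    exact (hbd n i).2
  set gstar : Fin K → ℝ := fun i => ⨆ n, g n i with hgstar
  have hlim : ∀ i, Tendsto (fun n => g n i) atTop (nhds (gstar i)) := fun i =>
    tendsto_atTop_ciSup (hmono' i) (hbdd i)
  have hgsbd : ∀ i, 0 ≤ gstar i ∧ gstar i ≤ 1 := by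
    intro i
    constructor
    · exact le_trans (hbd 0 i).1 (le_ciSup (hbdd i) 0)
    · exact ciSup_le fun n => (hbd n i).2
  refine ⟨gstar, hlim, ?_, ?_⟩
  · -- fixed point
    intro i
    have hsum : Tendsto (fun n => ∑ j, lam i j * g n j) atTop
        (nhds (∑ j, lam i j * gstar j)) :=
      tendsto_finset_sum _ fun j _ => (tendsto_const_nhds.mul (hlim j))
    have hstend : Tendsto (fun n => θ + ∑ j, lam i j - ∑ j, lam i j * g n j) atTop
        (nhds (θ + ∑ j, lam i j - ∑ j, lam i j * gstar j)) :=
      tendsto_const_nhds.sub hsum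
    have hDC : Tendsto (fun n => LST (F i) (θ + ∑ j, lam i j - ∑ j, lam i j * g n j)) atTop
        (nhds (LST (F i) (θ + ∑ j, lam i j - ∑ j, lam i j * gstar j))) := by
      unfold LST
      refine tendsto_integral_of_dominated_convergence (fun _ => (1:ℝ)) ?_
        (integrable_const 1) ?_ ?_
      · intro n
        exact (Real.continuous_exp.comp
          (continuous_const.mul continuous_id)).aestronglyMeasurable
      · intro n
        filter_upwards [lst_ae_nonneg (F i) (hFsupp i)] with t ht
        rw [Real.norm_eq_abs, abs_of_nonneg (Real.exp_nonneg _), Real.exp_le_one_iff]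
        have := harg (g n) (hbd n) i
        nlinarith
      · refine ae_of_all _ fun t => ?_
        exact (Real.continuous_exp.tendsto _).comp (hstend.neg.mul tendsto_const_nhds)
    have h1 : Tendsto (fun n => g (n + 1) i) atTop (nhds (gstar i)) :=
      (hlim i).comp (tendsto_add_atTop_nat 1)
    have h2 : Tendsto (fun n => g (n + 1) i) atTop
        (nhds (LST (F i) (θ + ∑ j, lam i j - ∑ j, lam i j * gstar j))) := by
      simpa only [hgrec] using hDC
    exact tendsto_nhds_unique h1 h2
  · -- minimality
    intro gt hgt hfix i
    have hle : ∀ n i, g n i ≤ gt i := by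
      intro n
      induction n with
      | zero =>
        intro i
        rw [hg0 i, hfix i]
        refine lst_anti _ (hFsupp i) (harg gt hgt i) ?_
        have : 0 ≤ ∑ j, lam i j * gt j :=
          Finset.sum_nonneg fun j _ => mul_nonneg (hlam i j) (hgt j).1
        linarith
      | succ n ih =>
        intro i
        rw [hgrec n i, hfix i]
        refine lst_anti _ (hFsupp i) (harg gt hgt i) ?_
        have : ∑ j, lam i j * g n j ≤ ∑ j, lam i j * gt j :=
          Finset.sum_le_sum fun j _ => mul_le_mul_of_nonneg_left (ih j) (hlam i j)
        linarith
    exact ciSup_le fun n => hle n i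
end

section
/- Let B₁,…,B_K be a busy-period family. If ρ(M) < 1 and E[B_j] < ∞ for every j, then for each i, E[B_i] = e_iᵀ (I − M)⁻¹ G⁻¹ e, i.e., the vector of means (E[B₁],…,E[B_K])ᵀ equals (I − M)⁻¹ G⁻¹ e, where e = (1,…,1)ᵀ and e_i is the i-th standard basis vector. -/
open MeasureTheory ProbabilityTheory Matrix Filter

/-- The mean offspring matrix `M = G⁻¹ Λ`, i.e. `M_{ij} = λ_{ij} / μᵢ`. -/
noncomputable def Mmat {K : ℕ} (lam : Matrix (Fin K) (Fin K) ℝ) (μ : Fin K → ℝ) :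
    Matrix (Fin K) (Fin K) ℝ :=
  Matrix.of fun i j => lam i j / μ i

/-- A busy-period family for arrival rates `lam` and service distributions `F`:
a family of laws `law i` (the distribution of the busy period `Bᵢ` initiated by a class
`i` customer, a nonnegative random variable) such that for each `i` there are, on some
probability space, a service time `S` with law `F i`, counts `N j` that are conditionally
independent Poisson with means `lam i j * S` given `S`, and nonnegative busy periods
`Bf m j` with law `law j`, mutually independent and independent of `(S, N)`, with
`S + ∑ⱼ ∑_{m < N j} Bf m j` distributed as `law i`. -/
structure BusyFamily (K : ℕ) (lam : Matrix (Fin K) (Fin K) ℝ)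
    (F : Fin K → Measure ℝ) where
  law : Fin K → Measure ℝ
  law_prob : ∀ i, IsProbabilityMeasure (law i)
  law_nonneg : ∀ i, law i (Set.Iio 0) = 0
  rep : ∀ i : Fin K, ∃ (Ω : Type) (_ : MeasurableSpace Ω) (μ : Measure Ω),
    IsProbabilityMeasure μ ∧
    ∃ (S : Ω → ℝ) (N : Fin K → Ω → ℕ) (Bf : ℕ → Fin K → Ω → ℝ),
      Measurable S ∧ (∀ j, Measurable (N j)) ∧ (∀ m j, Measurable (Bf m j)) ∧
      (∀ ω, 0 ≤ S ω) ∧ (∀ m j ω, 0 ≤ Bf m j ω) ∧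
      Measure.map S μ = F i ∧
      (∀ A : Set ℝ, MeasurableSet A → ∀ k : Fin K → ℕ,
        (μ {ω | S ω ∈ A ∧ ∀ j, N j ω = k j}).toReal
          = ∫ ω, (Set.indicator A (fun _ => (1 : ℝ)) (S ω)) *
              ∏ j, Real.exp (-(lam i j) * S ω) * (lam i j * S ω) ^ (k j)
                / (Nat.factorial (k j)) ∂μ) ∧
      iIndepFun (fun p : ℕ × Fin K => Bf p.1 p.2) μ ∧
      IndepFun (fun ω => (S ω, fun j => N j ω))
        (fun ω (p : ℕ × Fin K) => Bf p.1 p.2 ω) μ ∧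
      (∀ m j, Measure.map (Bf m j) μ = law j) ∧
      Measure.map (fun ω => S ω + ∑ j, ∑ m ∈ Finset.range (N j ω), Bf m j ω) μ = law i

open scoped ENNReal




lemma tsum_prod_pi : ∀ (K : ℕ) (q : Fin K → ℕ → ℝ≥0∞),
    ∑' k : Fin K → ℕ, ∏ l, q l (k l) = ∏ l, ∑' n, q l n := by
  intro K
  induction K with
  | zero =>
    intro q
    simp [tsum_eq_single (fun (i : Fin 0) => 0) (fun b hb => absurd (Subsingleton.elim b _) hb)]
  | succ n ih =>
    intro q
    rw [← (Fin.consEquiv fun _ : Fin (n+1) => ℕ).tsum_eq, ENNReal.tsum_prod']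
    have h1 : ∀ (a : ℕ) (b : Fin n → ℕ),
        (∏ l, q l ((Fin.consEquiv fun _ : Fin (n+1) => ℕ) (a, b) l))
          = q 0 a * ∏ l : Fin n, q l.succ (b l) := by
      intro a b
      rw [Fin.prod_univ_succ]
      simp [Fin.consEquiv]
    calc ∑' (a : ℕ) (b : Fin n → ℕ), ∏ l, q l ((Fin.consEquiv fun _ : Fin (n+1) => ℕ) (a, b) l)
        = ∑' (a : ℕ), q 0 a * ∑' (b : Fin n → ℕ), ∏ l : Fin n, q l.succ (b l) := by
          congr 1; funext a
          rw [← ENNReal.tsum_mul_left]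
          congr 1; funext b; exact h1 a b
      _ = (∑' a, q 0 a) * ∏ l : Fin n, ∑' m, q l.succ m := by
          rw [ih (fun l => q l.succ), ENNReal.tsum_mul_right]
      _ = ∏ l, ∑' m, q l m := by rw [Fin.prod_univ_succ]

lemma poisson_pmf_eq (a : ℝ) (ha : 0 ≤ a) (n : ℕ) :
    poissonPMFReal ⟨a, ha⟩ n = Real.exp (-a) * a ^ n / n.factorial := by
  simp [poissonPMFReal]
  rfl

lemma poisson_term_nonneg (a : ℝ) (ha : 0 ≤ a) (n : ℕ) :
    0 ≤ Real.exp (-a) * a ^ n / n.factorial := by positivity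

lemma poisson_term_le_one (a : ℝ) (ha : 0 ≤ a) (n : ℕ) :
    Real.exp (-a) * a ^ n / n.factorial ≤ 1 := by
  rw [← poisson_pmf_eq a ha]
  exact le_hasSum (poissonPMFRealSum ⟨a, ha⟩) n (fun m _ => poissonPMFReal_nonneg)

lemma poisson_sum (a : ℝ) (ha : 0 ≤ a) :
    ∑' n : ℕ, ENNReal.ofReal (Real.exp (-a) * a ^ n / n.factorial) = 1 := by
  have hs : Summable (fun n => Real.exp (-a) * a ^ n / n.factorial) :=
    (poissonPMFRealSum ⟨a, ha⟩).summable.congr (fun n => poisson_pmf_eq a ha n)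
  rw [← ENNReal.ofReal_tsum_of_nonneg (poisson_term_nonneg a ha) hs]
  have : ∑' n : ℕ, Real.exp (-a) * a ^ n / n.factorial = 1 := by
    rw [tsum_congr (fun n => (poisson_pmf_eq a ha n).symm)]
    exact (poissonPMFRealSum _).tsum_eq
  rw [this, ENNReal.ofReal_one]

lemma poisson_mean (a : ℝ) (ha : 0 ≤ a) :
    ∑' n : ℕ, (n : ℝ≥0∞) * ENNReal.ofReal (Real.exp (-a) * a ^ n / n.factorial)
      = ENNReal.ofReal a := by
  rw [tsum_eq_zero_add' (f := fun n : ℕ => (n : ℝ≥0∞)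
    * ENNReal.ofReal (Real.exp (-a) * a ^ n / n.factorial)) ENNReal.summable]
  simp only [Nat.cast_zero, zero_mul, zero_add]
  have key : ∀ n : ℕ, ((n + 1 : ℕ) : ℝ≥0∞)
        * ENNReal.ofReal (Real.exp (-a) * a ^ (n+1) / (n+1).factorial)
      = ENNReal.ofReal a * ENNReal.ofReal (Real.exp (-a) * a ^ n / n.factorial) := by
    intro n
    rw [← ENNReal.ofReal_natCast, ← ENNReal.ofReal_mul (by positivity),
      ← ENNReal.ofReal_mul ha]
    congr 1
    rw [Nat.factorial_succ]
    have h1 : ((n:ℝ) + 1) ≠ 0 := by positivity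
    have h2 : (n.factorial : ℝ) ≠ 0 := by positivity
    push_cast
    field_simp
    ring
  calc ∑' n : ℕ, ((n + 1 : ℕ) : ℝ≥0∞)
        * ENNReal.ofReal (Real.exp (-a) * a ^ (n+1) / (n+1).factorial)
      = ∑' n : ℕ, ENNReal.ofReal a * ENNReal.ofReal (Real.exp (-a) * a ^ n / n.factorial) := by
        congr 1; funext n; exact key n
    _ = ENNReal.ofReal a := by rw [ENNReal.tsum_mul_left, poisson_sum a ha, mul_one]



lemma isUnit_det_one_sub {K : ℕ} (M : Matrix (Fin K) (Fin K) ℝ)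
    (hρ : specRad M < 1) : IsUnit (1 - M).det := by
  rw [isUnit_iff_ne_zero]
  intro hdet
  set A := M.map (Complex.ofReal) with hA
  have hdetC : ((1 : Matrix (Fin K) (Fin K) ℂ) - A).det = 0 := by
    have h1 : ((1 : Matrix (Fin K) (Fin K) ℂ) - A)
        = (1 - M).map (Complex.ofRealHom : ℝ →+* ℂ) := by
      rw [← RingHom.mapMatrix_apply, map_sub, _root_.map_one, RingHom.mapMatrix_apply]
      rfl
    rw [h1, ← RingHom.mapMatrix_apply, ← RingHom.map_det, hdet, map_zero]
  have hroot : A.charpoly.IsRoot 1 := by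
    show Polynomial.eval 1 A.charpoly = 0
    rw [Matrix.charpoly, eval_det, Matrix.matPolyEquiv_charmatrix]
    rw [Polynomial.eval_sub, Polynomial.eval_X, Polynomial.eval_C]
    simpa using hdetC
  have hfin : {r : ℝ | ∃ z : ℂ, A.charpoly.IsRoot z ∧ r = ‖z‖}.Finite := by
    have hne : A.charpoly ≠ 0 := (Matrix.charpoly_monic _).ne_zero
    have h2 : {r : ℝ | ∃ z : ℂ, A.charpoly.IsRoot z ∧ r = ‖z‖}
        = (fun z : ℂ => ‖z‖) '' {z | A.charpoly.IsRoot z} := by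
      ext r; simp [Set.mem_image, eq_comm]
    rw [h2]
    exact (Polynomial.finite_setOf_isRoot hne).image _
  have hle : (1 : ℝ) ≤ specRad M := by
    apply le_csSup hfin.bddAbove
    exact ⟨1, hroot, by simp⟩
  linarith

lemma solve_linear {K : ℕ} (lam : Matrix (Fin K) (Fin K) ℝ) (μrate : Fin K → ℝ)
    (hμ : ∀ i, 0 < μrate i)
    (b : Fin K → ℝ)
    (hb : ∀ i, b i = 1 / μrate i + ∑ j, (lam i j / μrate i) * b j)
    (hρ : specRad (Matrix.of fun i j => lam i j / μrate i) < 1) :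
    ∀ i, b i = (((1 : Matrix (Fin K) (Fin K) ℝ) - Matrix.of fun i j => lam i j / μrate i)⁻¹
      *ᵥ ((Matrix.diagonal μrate)⁻¹ *ᵥ fun _ => (1 : ℝ))) i := by
  set M := (Matrix.of fun i j => lam i j / μrate i) with hM
  have hMveq : (1 - M) *ᵥ b = ((Matrix.diagonal μrate)⁻¹ *ᵥ fun _ => (1 : ℝ)) := by
    have hdiag : (Matrix.diagonal μrate)⁻¹ = Matrix.diagonal (fun i => (μrate i)⁻¹) := by
      apply Matrix.inv_eq_right_inv
      rw [Matrix.diagonal_mul_diagonal]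
      convert Matrix.diagonal_one
      exact mul_inv_cancel₀ (hμ _).ne'
    funext i
    rw [hdiag, Matrix.mulVec_diagonal, Matrix.sub_mulVec, Matrix.one_mulVec]
    rw [Pi.sub_apply]
    have : (M *ᵥ b) i = ∑ j, (lam i j / μrate i) * b j := by
      simp [Matrix.mulVec, dotProduct, hM]
    rw [this, hb i]
    ring
  have hunit := isUnit_det_one_sub M hρ
  have : (1 - M)⁻¹ *ᵥ ((1 - M) *ᵥ b) = b := by
    rw [Matrix.mulVec_mulVec, Matrix.nonsing_inv_mul _ hunit, Matrix.one_mulVec]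
  intro i
  rw [← hMveq, this]

lemma ae_nonneg_of_Iio {ν : Measure ℝ} (h : ν (Set.Iio 0) = 0) : 0 ≤ᵐ[ν] id := by
  rw [Filter.EventuallyLE, ae_iff]
  have : {x : ℝ | ¬ (0 : ℝ → ℝ) x ≤ id x} = Set.Iio 0 := by
    ext x; simp [not_le]
  rw [this, h]

lemma measurable_comp_nat {Ω : Type} [MeasurableSpace Ω] {γ : Type*} [MeasurableSpace γ]
    (N : Ω → ℕ) (hN : Measurable N) (h : ℕ → Ω → γ) (hh : ∀ n, Measurable (h n)) :
    Measurable (fun ω => h (N ω) ω) := by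
  have h1 : Measurable (fun p : Ω × ℕ => h p.2 p.1) :=
    measurable_from_prod_countable_left (fun n => hh n)
  exact h1.comp (measurable_id.prodMk hN)


lemma busy_mean_rec {K : ℕ} (lam : Matrix (Fin K) (Fin K) ℝ) (hlam : ∀ i j, 0 ≤ lam i j)
    (F : Fin K → Measure ℝ) (hFprob : ∀ i, IsProbabilityMeasure (F i))
    (hFsupp : ∀ i, F i (Set.Iio 0) = 0)
    (μrate : Fin K → ℝ) (hμ : ∀ i, 0 < μrate i)
    (hFint : ∀ i, Integrable id (F i))
    (hmean : ∀ i, ∫ x, x ∂(F i) = 1 / μrate i)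
    (B : BusyFamily K lam F)
    (hBint : ∀ j, Integrable id (B.law j)) (i : Fin K) :
    ∫ x, x ∂(B.law i) = 1 / μrate i + ∑ j, (lam i j / μrate i) * ∫ x, x ∂(B.law j) := by
  obtain ⟨Ω, mΩ, μ, hμprob, S, N, Bf, hSmeas, hNmeas, hBfmeas, hS0, hBf0, hmapS, hpmf,
    hiIndep, hIndep, hmapBf, hmapT⟩ := B.rep i
  haveI := hμprob
  -- real means of the busy periods
  set b : Fin K → ℝ := fun j => ∫ x, x ∂(B.law j) with hbdef
  have hbnonneg : ∀ j, 0 ≤ b j := fun j =>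
    integral_nonneg_of_ae (ae_nonneg_of_Iio (B.law_nonneg j))
  have hlawofReal : ∀ j, ∫⁻ x, ENNReal.ofReal x ∂(B.law j) = ENNReal.ofReal (b j) := fun j =>
    (ofReal_integral_eq_lintegral_ofReal (hBint j) (ae_nonneg_of_Iio (B.law_nonneg j))).symm
  -- mean service time
  have hSlint : ∫⁻ ω, ENNReal.ofReal (S ω) ∂μ = ENNReal.ofReal (1 / μrate i) := by
    rw [← lintegral_map ENNReal.measurable_ofReal hSmeas, hmapS, ← hmean i]
    exact (ofReal_integral_eq_lintegral_ofReal (hFint i) (ae_nonneg_of_Iio (hFsupp i))).symm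
  -- measurability of sums
  have hsum_meas : ∀ j, Measurable (fun ω => ∑ m ∈ Finset.range (N j ω), Bf m j ω) := by
    intro j
    exact measurable_comp_nat (N j) (hNmeas j) (fun n ω => ∑ m ∈ Finset.range n, Bf m j ω)
      (fun n => Finset.measurable_sum _ (fun m _ => hBfmeas m j))
  have hTmeas : Measurable (fun ω => S ω + ∑ j, ∑ m ∈ Finset.range (N j ω), Bf m j ω) :=
    hSmeas.add (Finset.measurable_sum _ (fun j _ => hsum_meas j))
  have hg_meas : ∀ j, Measurable (fun ω => ∑ m ∈ Finset.range (N j ω),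
      ENNReal.ofReal (Bf m j ω)) := by
    intro j
    exact measurable_comp_nat (N j) (hNmeas j)
      (fun n ω => ∑ m ∈ Finset.range n, ENNReal.ofReal (Bf m j ω))
      (fun n => Finset.measurable_sum _
        (fun m _ => ENNReal.measurable_ofReal.comp (hBfmeas m j)))
  -- Step 1: expectation as a lintegral over Ω
  have hLHS : ENNReal.ofReal (b i) = ∫⁻ ω, (ENNReal.ofReal (S ω)
      + ∑ j, ∑ m ∈ Finset.range (N j ω), ENNReal.ofReal (Bf m j ω)) ∂μ := by
    rw [← hlawofReal i, ← hmapT, lintegral_map ENNReal.measurable_ofReal hTmeas]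
    congr 1; funext ω
    rw [ENNReal.ofReal_add (hS0 ω) (Finset.sum_nonneg fun j _ =>
      Finset.sum_nonneg fun m _ => hBf0 m j ω)]
    congr 1
    rw [ENNReal.ofReal_sum_of_nonneg (fun j _ =>
      Finset.sum_nonneg fun m _ => hBf0 m j ω)]
    exact Finset.sum_congr rfl fun j _ =>
      ENNReal.ofReal_sum_of_nonneg (fun m _ => hBf0 m j ω)
  have hsplit : ∫⁻ ω, (ENNReal.ofReal (S ω)
      + ∑ j, ∑ m ∈ Finset.range (N j ω), ENNReal.ofReal (Bf m j ω)) ∂μ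
      = ∫⁻ ω, ENNReal.ofReal (S ω) ∂μ
        + ∑ j, ∫⁻ ω, (∑ m ∈ Finset.range (N j ω), ENNReal.ofReal (Bf m j ω)) ∂μ := by
    have hSof : Measurable (fun ω => ENNReal.ofReal (S ω)) :=
      ENNReal.measurable_ofReal.comp hSmeas
    rw [lintegral_add_left hSof]
    congr 1
    exact lintegral_finset_sum _ (fun j _ => hg_meas j)
  -- the partition by the value of the vector N
  set Nvec : Ω → (Fin K → ℕ) := fun ω j => N j ω with hNvecdef
  have hNvecMeas : Measurable Nvec := measurable_pi_lambda _ (fun j => hNmeas j)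
  set D : (Fin K → ℕ) → Set Ω := fun k => Nvec ⁻¹' {k} with hDdef
  have hDmem : ∀ k ω, ω ∈ D k ↔ Nvec ω = k := by
    intro k ω; simp [hDdef]
  have hDmeas : ∀ k, MeasurableSet (D k) := fun k => hNvecMeas (measurableSet_singleton k)
  have hDdisj : Pairwise (Function.onFun Disjoint D) := by
    intro k k' hkk'
    apply Set.disjoint_left.mpr
    intro ω h1 h2
    exact hkk' (((hDmem k ω).mp h1).symm.trans ((hDmem k' ω).mp h2))
  have hpart : ∀ f : Ω → ℝ≥0∞, ∫⁻ ω, f ω ∂μ = ∑' k, ∫⁻ ω in D k, f ω ∂μ := by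
    intro f
    have hDunion : (⋃ k, D k) = Set.univ := by
      ext ω; simp only [Set.mem_iUnion, Set.mem_univ, iff_true]
      exact ⟨Nvec ω, (hDmem _ ω).mpr rfl⟩
    rw [← setLIntegral_univ, ← hDunion, lintegral_iUnion hDmeas hDdisj]
  -- the joint pmf of N
  set f : (Fin K → ℕ) → Ω → ℝ := fun k ω => ∏ l, Real.exp (-(lam i l) * S ω)
      * (lam i l * S ω) ^ (k l) / (Nat.factorial (k l)) with hfdef
  have hf_meas : ∀ k, Measurable (f k) := by
    intro k
    apply Finset.measurable_prod
    intro l _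
    exact ((Real.measurable_exp.comp (hSmeas.const_mul _)).mul
      ((hSmeas.const_mul _).pow_const _)).div_const _
  have hf_nonneg : ∀ k ω, 0 ≤ f k ω := by
    intro k ω
    apply Finset.prod_nonneg
    intro l _
    exact div_nonneg (mul_nonneg (Real.exp_pos _).le
      (pow_nonneg (mul_nonneg (hlam i l) (hS0 ω)) _)) (Nat.cast_nonneg _)
  have hf_le_one : ∀ k ω, f k ω ≤ 1 := by
    intro k ω
    apply Finset.prod_le_one
    · intro l _
      exact div_nonneg (mul_nonneg (Real.exp_pos _).le
        (pow_nonneg (mul_nonneg (hlam i l) (hS0 ω)) _)) (Nat.cast_nonneg _)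
    · intro l _
      rw [neg_mul]
      exact poisson_term_le_one (lam i l * S ω) (mul_nonneg (hlam i l) (hS0 ω)) (k l)
  have hμD : ∀ k, μ (D k) = ∫⁻ ω, ENNReal.ofReal (f k ω) ∂μ := by
    intro k
    have hset : {ω | S ω ∈ Set.univ ∧ ∀ j, N j ω = k j} = D k := by
      ext ω
      simp only [Set.mem_univ, true_and, Set.mem_setOf_eq, hDmem, funext_iff]
      exact Iff.rfl
    have h1 := hpmf Set.univ MeasurableSet.univ k
    rw [hset] at h1
    simp only [Set.indicator_univ, one_mul] at h1
    have hint : Integrable (f k) μ := by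
      apply (integrable_const (1:ℝ)).mono' (hf_meas k).aestronglyMeasurable
      refine Filter.Eventually.of_forall (fun ω => ?_)
      rw [Real.norm_eq_abs, abs_of_nonneg (hf_nonneg k ω)]
      exact hf_le_one k ω
    have h1' : (μ (D k)).toReal = ∫ ω, f k ω ∂μ := h1
    rw [← ENNReal.ofReal_toReal (measure_ne_top μ (D k)), h1',
      ofReal_integral_eq_lintegral_ofReal hint (Filter.Eventually.of_forall (hf_nonneg k))]
  -- Wald's step
  have hgj : ∀ j, ∫⁻ ω, (∑ m ∈ Finset.range (N j ω), ENNReal.ofReal (Bf m j ω)) ∂μ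
      = ENNReal.ofReal (lam i j) * ENNReal.ofReal (1 / μrate i) * ENNReal.ofReal (b j) := by
    intro j
    rw [hpart]
    have hDk : ∀ k : Fin K → ℕ,
        ∫⁻ ω in D k, (∑ m ∈ Finset.range (N j ω), ENNReal.ofReal (Bf m j ω)) ∂μ
        = (k j : ℝ≥0∞) * (μ (D k) * ENNReal.ofReal (b j)) := by
      intro k
      have h1 : ∫⁻ ω in D k, (∑ m ∈ Finset.range (N j ω), ENNReal.ofReal (Bf m j ω)) ∂μ
          = ∫⁻ ω in D k, (∑ m ∈ Finset.range (k j), ENNReal.ofReal (Bf m j ω)) ∂μ := by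
        apply setLIntegral_congr_fun (hDmeas k)
        intro ω hω
        beta_reduce
        have hNω : N j ω = k j := congrFun ((hDmem k ω).mp hω) j
        rw [hNω]
      have h2 : ∀ m, ∫⁻ ω in D k, ENNReal.ofReal (Bf m j ω) ∂μ
          = μ (D k) * ENNReal.ofReal (b j) := by
        intro m
        set φ : ℝ × (Fin K → ℕ) → ℝ≥0∞ := fun p => if p.2 = k then 1 else 0 with hφdef
        set ψ : (ℕ × Fin K → ℝ) → ℝ≥0∞ := fun v => ENNReal.ofReal (v (m, j)) with hψdef
        have hφmeas : Measurable φ :=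
          Measurable.ite (measurable_snd (measurableSet_singleton k))
            measurable_const measurable_const
        have hψmeas : Measurable ψ := ENNReal.measurable_ofReal.comp (measurable_pi_apply _)
        have hcomp : IndepFun (fun ω => φ (S ω, fun j => N j ω))
            (fun ω => ψ (fun p : ℕ × Fin K => Bf p.1 p.2 ω)) μ := hIndep.comp hφmeas hψmeas
        have hXmeas : Measurable (fun ω => φ (S ω, fun j => N j ω)) :=
          hφmeas.comp (hSmeas.prodMk hNvecMeas)
        have hYmeas : Measurable (fun ω => ψ (fun p : ℕ × Fin K => Bf p.1 p.2 ω)) :=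
          hψmeas.comp (measurable_pi_lambda _ (fun p => hBfmeas p.1 p.2))
        have hmul := lintegral_mul_eq_lintegral_mul_lintegral_of_indepFun hXmeas hYmeas hcomp
        have e1 : ∫⁻ ω, ((fun ω => φ (S ω, fun j => N j ω))
              * fun ω => ψ (fun p : ℕ × Fin K => Bf p.1 p.2 ω)) ω ∂μ
            = ∫⁻ ω in D k, ENNReal.ofReal (Bf m j ω) ∂μ := by
          rw [← lintegral_indicator (hDmeas k)]
          congr 1; funext ω
          rw [Pi.mul_apply]
          by_cases hω : ω ∈ D k
          · rw [Set.indicator_of_mem hω]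
            have hNk : (fun j => N j ω) = k := (hDmem k ω).mp hω
            show (if (fun j => N j ω) = k then (1:ℝ≥0∞) else 0)
              * ENNReal.ofReal (Bf m j ω) = ENNReal.ofReal (Bf m j ω)
            rw [if_pos hNk, one_mul]
          · rw [Set.indicator_of_notMem hω]
            have hNk : ¬ (fun j => N j ω) = k := fun h => hω ((hDmem k ω).mpr h)
            show (if (fun j => N j ω) = k then (1:ℝ≥0∞) else 0)
              * ENNReal.ofReal (Bf m j ω) = 0
            rw [if_neg hNk, zero_mul]
        have e2 : ∫⁻ ω, φ (S ω, fun j => N j ω) ∂μ = μ (D k) := by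
          have hind : (fun ω => φ (S ω, fun j => N j ω))
              = Set.indicator (D k) (1 : Ω → ℝ≥0∞) := by
            funext ω
            by_cases hω : ω ∈ D k
            · rw [Set.indicator_of_mem hω]
              have hNk : (fun j => N j ω) = k := (hDmem k ω).mp hω
              show (if (fun j => N j ω) = k then (1:ℝ≥0∞) else 0) = (1 : Ω → ℝ≥0∞) ω
              rw [if_pos hNk]; rfl
            · rw [Set.indicator_of_notMem hω]
              have hNk : ¬ (fun j => N j ω) = k := fun h => hω ((hDmem k ω).mpr h)
              show (if (fun j => N j ω) = k then (1:ℝ≥0∞) else 0) = 0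
              rw [if_neg hNk]
          rw [hind, lintegral_indicator_one (hDmeas k)]
        have e3 : ∫⁻ ω, ψ (fun p : ℕ × Fin K => Bf p.1 p.2 ω) ∂μ = ENNReal.ofReal (b j) := by
          have hid : (fun ω => ψ (fun p : ℕ × Fin K => Bf p.1 p.2 ω))
              = fun ω => ENNReal.ofReal (Bf m j ω) := rfl
          rw [hid, ← lintegral_map ENNReal.measurable_ofReal (hBfmeas m j), hmapBf m j,
            hlawofReal j]
        rw [← e1, hmul, e2, e3]
      have hBof : ∀ m : ℕ, Measurable (fun ω => ENNReal.ofReal (Bf m j ω)) :=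
        fun m => ENNReal.measurable_ofReal.comp (hBfmeas m j)
      rw [h1, lintegral_finset_sum _ (fun m _ => hBof m),
        Finset.sum_congr rfl (fun m _ => h2 m), Finset.sum_const, Finset.card_range,
        nsmul_eq_mul]
    rw [tsum_congr hDk]
    have hfactor : ∑' k : Fin K → ℕ, (k j : ℝ≥0∞) * (μ (D k) * ENNReal.ofReal (b j))
        = (∑' k : Fin K → ℕ, (k j : ℝ≥0∞) * μ (D k)) * ENNReal.ofReal (b j) := by
      rw [← ENNReal.tsum_mul_right]
      exact tsum_congr fun k => by ring
    rw [hfactor]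
    have hSig : ∑' k : Fin K → ℕ, (k j : ℝ≥0∞) * μ (D k)
        = ENNReal.ofReal (lam i j) * ENNReal.ofReal (1 / μrate i) := by
      have hofm : ∀ k : Fin K → ℕ, Measurable (fun ω => ENNReal.ofReal (f k ω)) :=
        fun k => ENNReal.measurable_ofReal.comp (hf_meas k)
      have h1 : ∀ k : Fin K → ℕ, (k j : ℝ≥0∞) * μ (D k)
          = ∫⁻ ω, (k j : ℝ≥0∞) * ENNReal.ofReal (f k ω) ∂μ := by
        intro k
        rw [hμD k, lintegral_const_mul _ (hofm k)]
      rw [tsum_congr h1, ← lintegral_tsum (fun k =>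
        ((hofm k).const_mul _).aemeasurable)]
      have h2 : ∀ ω, (∑' k : Fin K → ℕ, (k j : ℝ≥0∞) * ENNReal.ofReal (f k ω))
          = ENNReal.ofReal (lam i j) * ENNReal.ofReal (S ω) := by
        intro ω
        have ha : ∀ l, 0 ≤ lam i l * S ω := fun l => mul_nonneg (hlam i l) (hS0 ω)
        have h3 : ∀ k : Fin K → ℕ, (k j : ℝ≥0∞) * ENNReal.ofReal (f k ω)
            = ∏ l, ((if l = j then ((k l : ℝ≥0∞)) else 1)
                * ENNReal.ofReal (Real.exp (-(lam i l * S ω)) * (lam i l * S ω) ^ (k l)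
                  / (Nat.factorial (k l)))) := by
          intro k
          rw [Finset.prod_mul_distrib, Finset.prod_ite_eq' Finset.univ j
            (fun l => ((k l : ℝ≥0∞)))]
          simp only [Finset.mem_univ, if_true]
          congr 1
          rw [hfdef]
          simp only
          rw [ENNReal.ofReal_prod_of_nonneg (fun l _ => by
            have hn := poisson_term_nonneg (lam i l * S ω) (ha l) (k l)
            rw [neg_mul]
            exact hn)]
          exact Finset.prod_congr rfl (fun l _ => by rw [neg_mul])
        rw [tsum_congr h3,
          tsum_prod_pi K (fun l n => (if l = j then (n : ℝ≥0∞) else 1)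
            * ENNReal.ofReal (Real.exp (-(lam i l * S ω)) * (lam i l * S ω) ^ n
              / (Nat.factorial n)))]
        have h4 : ∀ l, (∑' n : ℕ, (if l = j then (n : ℝ≥0∞) else 1)
            * ENNReal.ofReal (Real.exp (-(lam i l * S ω)) * (lam i l * S ω) ^ n
              / (Nat.factorial n)))
            = if l = j then ENNReal.ofReal (lam i l * S ω) else 1 := by
          intro l
          by_cases hlj : l = j
          · subst hlj
            simp only [if_pos rfl]
            exact poisson_mean _ (ha l)
          · simp only [if_neg hlj, one_mul]
            exact poisson_sum _ (ha l)
        rw [Finset.prod_congr rfl (fun l _ => h4 l), Finset.prod_ite_eq' Finset.univ j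
          (fun l => ENNReal.ofReal (lam i l * S ω))]
        simp only [Finset.mem_univ, if_true]
        rw [ENNReal.ofReal_mul (hlam i j)]
      have hSof : Measurable (fun ω => ENNReal.ofReal (S ω)) :=
        ENNReal.measurable_ofReal.comp hSmeas
      rw [lintegral_congr h2, lintegral_const_mul _ hSof, hSlint]
    rw [hSig]
  -- combine everything
  have hμinv : (0:ℝ) ≤ 1 / μrate i := div_nonneg zero_le_one (hμ i).le
  have hmain : ENNReal.ofReal (b i) = ENNReal.ofReal (1 / μrate i)
      + ∑ j, ENNReal.ofReal (lam i j) * ENNReal.ofReal (1 / μrate i) * ENNReal.ofReal (b j) := by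
    rw [hLHS, hsplit, hSlint, Finset.sum_congr rfl (fun j _ => hgj j)]
  have hrhs : ENNReal.ofReal (1 / μrate i)
      + ∑ j, ENNReal.ofReal (lam i j) * ENNReal.ofReal (1 / μrate i) * ENNReal.ofReal (b j)
      = ENNReal.ofReal (1 / μrate i + ∑ j, (lam i j / μrate i) * b j) := by
    rw [ENNReal.ofReal_add hμinv (Finset.sum_nonneg fun j _ =>
      mul_nonneg (div_nonneg (hlam i j) (hμ i).le) (hbnonneg j))]
    congr 1
    rw [ENNReal.ofReal_sum_of_nonneg (fun j _ =>
      mul_nonneg (div_nonneg (hlam i j) (hμ i).le) (hbnonneg j))]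
    refine Finset.sum_congr rfl (fun j _ => ?_)
    rw [← ENNReal.ofReal_mul (hlam i j), ← ENNReal.ofReal_mul
      (mul_nonneg (hlam i j) hμinv)]
    congr 1
    ring
  rw [hrhs] at hmain
  have hfin := (ENNReal.ofReal_eq_ofReal_iff (hbnonneg i)
    (add_nonneg hμinv (Finset.sum_nonneg fun j _ =>
      mul_nonneg (div_nonneg (hlam i j) (hμ i).le) (hbnonneg j)))).mp hmain
  exact hfin

/-- Let `B₁, …, B_K` be a busy-period family, where the service
distributions `Fᵢ` are probability measures on `[0,∞)` with finite positive means
`mᵢ = 1/μᵢ`. If `ρ(M) < 1` and `E[Bⱼ] < ∞` for every `j`, then for each `i`,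
`E[Bᵢ] = eᵢᵀ (I - M)⁻¹ G⁻¹ e`. -/
theorem stmt9 {K : ℕ} (hK : 1 ≤ K)
    (lam : Matrix (Fin K) (Fin K) ℝ) (hlam : ∀ i j, 0 ≤ lam i j)
    (F : Fin K → Measure ℝ) (hFprob : ∀ i, IsProbabilityMeasure (F i))
    (hFsupp : ∀ i, F i (Set.Iio 0) = 0)
    (μrate : Fin K → ℝ) (hμ : ∀ i, 0 < μrate i)
    (hFint : ∀ i, Integrable id (F i))
    (hmean : ∀ i, ∫ x, x ∂(F i) = 1 / μrate i)
    (B : BusyFamily K lam F)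
    (hρ : specRad (Mmat lam μrate) < 1)
    (hBint : ∀ j, Integrable id (B.law j)) :
    ∀ i, ∫ x, x ∂(B.law i)
      = ((1 - Mmat lam μrate)⁻¹ *ᵥ ((Matrix.diagonal μrate)⁻¹ *ᵥ fun _ => (1 : ℝ))) i := by
  have hb : ∀ i, ∫ x, x ∂(B.law i)
      = 1 / μrate i + ∑ j, (lam i j / μrate i) * ∫ x, x ∂(B.law j) :=
    busy_mean_rec lam hlam F hFprob hFsupp μrate hμ hFint hmean B hBint
  intro i
  exact solve_linear lam μrate hμ (fun j => ∫ x, x ∂(B.law j)) hb hρ i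
end

section
/- Let S be a nonnegative random variable whose tail P(S > x) is regularly varying of index α for some α > 0, let λ > 0, and let N be an ℕ-valued random variable whose conditional distribution given S is Poisson with mean λS. Then the conditional distribution of (S, N)/(S + N) given S + N > x converges to the one-point distribution at (1/(1+λ), λ/(1+λ)): for every ε > 0, P(|S/(S+N) − 1/(1+λ)| > ε | S + N > x) → 0 as x → ∞. -/
open MeasureTheory Filter

/-- `N` is conditionally Poisson with mean `lam * S` given `S`: for every Borel set `A`
and every `k ∈ ℕ`, `P(S ∈ A, N = k) = E[1_A(S) e^{-λS} (λS)^k / k!]`. -/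
def CondPoisson {Ω : Type*} [MeasurableSpace Ω] (μ : Measure Ω)
    (S : Ω → ℝ) (lam : ℝ) (N : Ω → ℕ) : Prop :=
  ∀ A : Set ℝ, MeasurableSet A → ∀ k : ℕ,
    (μ {ω | S ω ∈ A ∧ N ω = k}).toReal
      = ∫ ω, Set.indicator A (fun _ => (1 : ℝ)) (S ω) *
          Real.exp (-lam * S ω) * (lam * S ω) ^ k / (Nat.factorial k) ∂μ

/-- The tail of `S` is regularly varying of index `α > 0`: `P(S > x) > 0` for all `x` and
`P(S > t x)/P(S > x) → t^{-α}` as `x → ∞` for every `t > 0`. -/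
def RegVaryingTailRV {Ω : Type*} [MeasurableSpace Ω] (μ : Measure Ω)
    (S : Ω → ℝ) (α : ℝ) : Prop :=
  (∀ x : ℝ, 0 < (μ {ω | x < S ω}).toReal) ∧
  ∀ t : ℝ, 0 < t →
    Tendsto (fun x => (μ {ω | t * x < S ω}).toReal / (μ {ω | x < S ω}).toReal)
      atTop (nhds (t ^ (-α)))


namespace Stmt13Aux

open Real Set ENNReal

lemma exp_tsum (x : ℝ) : (∑' n : ℕ, x ^ n / n.factorial) = Real.exp x := by
  rw [Real.exp_eq_exp_ℝ]
  exact (NormedSpace.expSeries_div_hasSum_exp x).tsum_eq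

lemma pow_div_factorial_le_exp {x : ℝ} (hx : 0 ≤ x) (k : ℕ) :
    x ^ k / k.factorial ≤ Real.exp x := by
  rw [← exp_tsum]
  exact Summable.le_tsum (Real.summable_pow_div_factorial x) k
    (fun n _ => by positivity)

lemma pois_le_one {m : ℝ} (hm : 0 ≤ m) (k : ℕ) :
    Real.exp (-m) * m ^ k / k.factorial ≤ 1 := by
  have h := pow_div_factorial_le_exp hm k
  have h2 : Real.exp (-m) * Real.exp m = 1 := by rw [← Real.exp_add]; simp
  have h3 : 0 < Real.exp (-m) := Real.exp_pos _
  calc Real.exp (-m) * m ^ k / k.factorial = (m ^ k / k.factorial) * Real.exp (-m) := by ring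
    _ ≤ Real.exp m * Real.exp (-m) := mul_le_mul_of_nonneg_right h h3.le
    _ = 1 := by rw [mul_comm]; exact h2

variable {Ω : Type*} [MeasurableSpace Ω] {μ : Measure Ω} [IsProbabilityMeasure μ]
  {S : Ω → ℝ} {lam : ℝ} {N : Ω → ℕ}

lemma L1 (hSmeas : Measurable S) (hSnonneg : ∀ ω, 0 ≤ S ω) (hlam : 0 < lam)
    (hNmeas : Measurable N) (hN : CondPoisson μ S lam N) (k : ℕ)
    {g : ℝ → ℝ≥0∞} (hg : Measurable g) :
    ∫⁻ ω in {ω | N ω = k}, g (S ω) ∂μ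
      = ∫⁻ ω, g (S ω) *
          ENNReal.ofReal (Real.exp (-lam * S ω) * (lam * S ω) ^ k / (Nat.factorial k)) ∂μ := by
  set p : ℝ → ℝ≥0∞ :=
    fun s => ENNReal.ofReal (Real.exp (-lam * s) * (lam * s) ^ k / (Nat.factorial k)) with hp_def
  have hp : Measurable p := by
    apply Measurable.ennreal_ofReal
    fun_prop
  have hNk : MeasurableSet {ω | N ω = k} := hNmeas (measurableSet_singleton k)
  have hmeq : Measure.map S (μ.restrict {ω | N ω = k}) = (Measure.map S μ).withDensity p := by
    ext A hA
    rw [Measure.map_apply hSmeas hA, Measure.restrict_apply (hSmeas hA),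
      withDensity_apply _ hA, MeasureTheory.setLIntegral_map hA hp hSmeas]
    -- goal : μ (S ⁻¹' A ∩ {ω | N ω = k}) = ∫⁻ ω in S ⁻¹' A, p (S ω) ∂μ
    set f : Ω → ℝ := fun ω => Set.indicator A (fun _ => (1 : ℝ)) (S ω) *
          Real.exp (-lam * S ω) * (lam * S ω) ^ k / (Nat.factorial k) with hf_def
    have hfnonneg : ∀ ω, 0 ≤ f ω := by
      intro ω
      have hi : (0:ℝ) ≤ Set.indicator A (fun _ => (1 : ℝ)) (S ω) :=
        Set.indicator_nonneg (fun _ _ => zero_le_one) _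
      have h0 : (0:ℝ) ≤ lam * S ω := mul_nonneg hlam.le (hSnonneg ω)
      exact div_nonneg (mul_nonneg (mul_nonneg hi (Real.exp_pos _).le)
        (pow_nonneg h0 k)) (Nat.cast_nonneg _)
    have hfmeas : Measurable f := by
      apply Measurable.div _ measurable_const
      apply Measurable.mul
      apply Measurable.mul
      · exact (measurable_one.indicator hA).comp hSmeas
      · fun_prop
      · fun_prop
    have hfle : ∀ ω, f ω ≤ 1 := by
      intro ω
      have h0 : (0:ℝ) ≤ lam * S ω := mul_nonneg hlam.le (hSnonneg ω)
      have h1 : (lam * S ω) ^ k / (Nat.factorial k) * Real.exp (-(lam * S ω)) ≤ 1 := by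
        rw [show (lam * S ω) ^ k / (Nat.factorial k : ℝ) * Real.exp (-(lam * S ω))
          = Real.exp (-(lam * S ω)) * (lam * S ω) ^ k / (Nat.factorial k) from by ring]
        exact pois_le_one h0 k
      by_cases hmem : S ω ∈ A
      · rw [hf_def]
        simp only [Set.indicator_of_mem hmem]
        calc (1:ℝ) * Real.exp (-lam * S ω) * (lam * S ω) ^ k / (Nat.factorial k)
            = (lam * S ω) ^ k / (Nat.factorial k) * Real.exp (-(lam * S ω)) := by ring_nf
          _ ≤ 1 := h1
      · simp [hf_def, Set.indicator_of_notMem hmem]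
    have hfint : Integrable f μ := by
      apply (integrable_const (1:ℝ)).mono' hfmeas.aestronglyMeasurable
      filter_upwards with ω
      rw [Real.norm_eq_abs, abs_of_nonneg (hfnonneg ω)]
      exact hfle ω
    have hμE : μ {ω | S ω ∈ A ∧ N ω = k} = ∫⁻ ω, ENNReal.ofReal (f ω) ∂μ := by
      have h1 : μ {ω | S ω ∈ A ∧ N ω = k}
          = ENNReal.ofReal ((μ {ω | S ω ∈ A ∧ N ω = k}).toReal) :=
        (ENNReal.ofReal_toReal (measure_ne_top μ _)).symm
      rw [h1, hN A hA k, ofReal_integral_eq_lintegral_ofReal hfint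
        (Filter.Eventually.of_forall hfnonneg)]
    have hset : {ω | S ω ∈ A ∧ N ω = k} = S ⁻¹' A ∩ {ω | N ω = k} := rfl
    rw [← hset, hμE]
    rw [← lintegral_indicator (hSmeas hA)]
    congr 1
    ext ω
    by_cases hmem : S ω ∈ A
    · rw [Set.indicator_of_mem (by exact hmem : ω ∈ S ⁻¹' A)]
      rw [hf_def]
      simp only [Set.indicator_of_mem hmem, one_mul, hp_def]
    · rw [Set.indicator_of_notMem (by exact hmem : ω ∉ S ⁻¹' A)]
      simp [hf_def, Set.indicator_of_notMem hmem]
  calc ∫⁻ ω in {ω | N ω = k}, g (S ω) ∂μ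
      = ∫⁻ s, g s ∂(Measure.map S (μ.restrict {ω | N ω = k})) := by
        rw [lintegral_map hg hSmeas]
    _ = ∫⁻ s, g s ∂((Measure.map S μ).withDensity p) := by rw [hmeq]
    _ = ∫⁻ s, (p * g) s ∂(Measure.map S μ) :=
        lintegral_withDensity_eq_lintegral_mul _ hp hg
    _ = ∫⁻ ω, (p * g) (S ω) ∂μ := lintegral_map (hp.mul hg) hSmeas
    _ = ∫⁻ ω, g (S ω) * p (S ω) ∂μ := by
        congr 1; ext ω; simp [Pi.mul_apply, mul_comm]


lemma sum_key (θ : ℝ) (hlam : 0 < lam) {s : ℝ} (hs : 0 ≤ s) :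
    ∑' k : ℕ, ENNReal.ofReal (Real.exp (θ * k)) *
        ENNReal.ofReal (Real.exp (-lam * s) * (lam * s) ^ k / (Nat.factorial k))
      = ENNReal.ofReal (Real.exp (lam * (Real.exp θ - 1) * s)) := by
  have ha : (0:ℝ) ≤ lam * s * Real.exp θ := by positivity
  have h1 : ∀ k : ℕ, ENNReal.ofReal (Real.exp (θ * k)) *
      ENNReal.ofReal (Real.exp (-lam * s) * (lam * s) ^ k / (Nat.factorial k))
      = ENNReal.ofReal (Real.exp (-lam * s) * (lam * s * Real.exp θ) ^ k / (Nat.factorial k)) := by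
    intro k
    rw [← ENNReal.ofReal_mul (Real.exp_nonneg _)]
    congr 1
    rw [mul_pow, show θ * k = (k : ℕ) * θ from by ring, Real.exp_nat_mul]
    ring
  simp only [h1]
  rw [← ENNReal.ofReal_tsum_of_nonneg]
  · congr 1
    have : (fun k : ℕ => Real.exp (-lam * s) * (lam * s * Real.exp θ) ^ k / (Nat.factorial k))
        = fun k : ℕ => Real.exp (-lam * s) * ((lam * s * Real.exp θ) ^ k / (Nat.factorial k)) := by
      funext k; ring
    rw [this, tsum_mul_left, exp_tsum, ← Real.exp_add]
    congr 1
    ring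
  · intro k
    have : (0:ℝ) ≤ (lam * s * Real.exp θ) ^ k := pow_nonneg ha k
    positivity
  · have hsummable := Real.summable_pow_div_factorial (lam * s * Real.exp θ)
    have := hsummable.mul_left (Real.exp (-lam * s))
    simpa [mul_div_assoc] using this

lemma L2 (hSmeas : Measurable S) (hSnonneg : ∀ ω, 0 ≤ S ω) (hlam : 0 < lam)
    (hNmeas : Measurable N) (hN : CondPoisson μ S lam N) (θ : ℝ)
    {g : ℝ → ℝ≥0∞} (hg : Measurable g) :
    ∫⁻ ω, g (S ω) * ENNReal.ofReal (Real.exp (θ * N ω)) ∂μ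
      = ∫⁻ ω, g (S ω) * ENNReal.ofReal (Real.exp (lam * (Real.exp θ - 1) * S ω)) ∂μ := by
  have hNk : ∀ k : ℕ, MeasurableSet {ω | N ω = k} :=
    fun k => hNmeas (measurableSet_singleton k)
  have hgS : Measurable fun ω => g (S ω) := hg.comp hSmeas
  have hpt : ∀ ω, g (S ω) * ENNReal.ofReal (Real.exp (θ * N ω))
      = ∑' k : ℕ, Set.indicator {ω' | N ω' = k}
          (fun ω'' => g (S ω'') * ENNReal.ofReal (Real.exp (θ * k))) ω := by
    intro ω
    rw [tsum_eq_single (N ω)]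
    · rw [Set.indicator_of_mem (by simp : ω ∈ {ω' | N ω' = N ω})]
    · intro b hb
      rw [Set.indicator_of_notMem]
      simp only [Set.mem_setOf_eq]
      exact fun h => hb (h ▸ rfl)
  calc ∫⁻ ω, g (S ω) * ENNReal.ofReal (Real.exp (θ * N ω)) ∂μ
      = ∫⁻ ω, ∑' k : ℕ, Set.indicator {ω' | N ω' = k}
          (fun ω'' => g (S ω'') * ENNReal.ofReal (Real.exp (θ * k))) ω ∂μ := by
        congr 1; funext ω; exact hpt ω
    _ = ∑' k : ℕ, ∫⁻ ω, Set.indicator {ω' | N ω' = k}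
          (fun ω'' => g (S ω'') * ENNReal.ofReal (Real.exp (θ * k))) ω ∂μ := by
        apply lintegral_tsum
        intro k
        exact ((hgS.mul measurable_const).indicator (hNk k)).aemeasurable
    _ = ∑' k : ℕ, ∫⁻ ω in {ω' | N ω' = k},
          g (S ω) * ENNReal.ofReal (Real.exp (θ * k)) ∂μ := by
        congr 1; funext k; exact lintegral_indicator (hNk k) _
    _ = ∑' k : ℕ, (∫⁻ ω in {ω' | N ω' = k}, g (S ω) ∂μ) * ENNReal.ofReal (Real.exp (θ * k)) := by
        congr 1; funext k; exact lintegral_mul_const _ hgS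
    _ = ∑' k : ℕ, (∫⁻ ω, g (S ω) *
          ENNReal.ofReal (Real.exp (-lam * S ω) * (lam * S ω) ^ k / (Nat.factorial k)) ∂μ)
          * ENNReal.ofReal (Real.exp (θ * k)) := by
        congr 1; funext k; rw [L1 hSmeas hSnonneg hlam hNmeas hN k hg]
    _ = ∑' k : ℕ, ∫⁻ ω, g (S ω) * (ENNReal.ofReal (Real.exp (θ * k)) *
          ENNReal.ofReal (Real.exp (-lam * S ω) * (lam * S ω) ^ k / (Nat.factorial k))) ∂μ := by
        congr 1; funext k
        rw [← lintegral_mul_const _ (show Measurable fun ω => g (S ω) *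
          ENNReal.ofReal (Real.exp (-lam * S ω) * (lam * S ω) ^ k / (Nat.factorial k)) from
          hgS.mul (by fun_prop))]
        congr 1; funext ω; ring
    _ = ∫⁻ ω, ∑' k : ℕ, g (S ω) * (ENNReal.ofReal (Real.exp (θ * k)) *
          ENNReal.ofReal (Real.exp (-lam * S ω) * (lam * S ω) ^ k / (Nat.factorial k))) ∂μ := by
        rw [← lintegral_tsum]
        intro k
        exact (hgS.mul (measurable_const.mul (by fun_prop))).aemeasurable
    _ = ∫⁻ ω, g (S ω) * ENNReal.ofReal (Real.exp (lam * (Real.exp θ - 1) * S ω)) ∂μ := by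
        congr 1; funext ω
        rw [ENNReal.tsum_mul_left, sum_key θ hlam (hSnonneg ω)]

lemma chernoff (hSmeas : Measurable S) (hSnonneg : ∀ ω, 0 ≤ S ω) (hlam : 0 < lam)
    (hNmeas : Measurable N) (hN : CondPoisson μ S lam N)
    (θ β κ R : ℝ) {A : Set ℝ} (hA : MeasurableSet A)
    (hb : ∀ s ∈ A, (lam * (Real.exp θ - 1) - β) * s ≤ R) :
    μ {ω | S ω ∈ A ∧ β * S ω + κ ≤ θ * (N ω : ℝ)} ≤ ENNReal.ofReal (Real.exp (R - κ)) := by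
  set g : ℝ → ℝ≥0∞ := A.indicator (fun s => ENNReal.ofReal (Real.exp (-β * s))) with hg_def
  have hg : Measurable g := by
    apply Measurable.indicator _ hA
    fun_prop
  have hgS : Measurable fun ω => g (S ω) := hg.comp hSmeas
  set E : Set Ω := {ω | S ω ∈ A ∧ β * S ω + κ ≤ θ * (N ω : ℝ)} with hE_def
  have hNR : Measurable fun ω => (N ω : ℝ) := measurable_from_top.comp hNmeas
  have hexpN : Measurable fun ω => ENNReal.ofReal (Real.exp (θ * (N ω : ℝ))) :=
    Measurable.ennreal_ofReal (Real.measurable_exp.comp (hNR.const_mul θ))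
  have hEmeas : MeasurableSet E := by
    apply (hSmeas hA).inter
    exact measurableSet_le ((hSmeas.const_mul β).add_const κ) (hNR.const_mul θ)
  have h1 : μ E ≤ ∫⁻ ω, (g (S ω) * ENNReal.ofReal (Real.exp (θ * N ω)))
      * ENNReal.ofReal (Real.exp (-κ)) ∂μ := by
    rw [← lintegral_indicator_one hEmeas]
    apply lintegral_mono
    intro ω
    dsimp only
    by_cases hω : ω ∈ E
    · rw [Set.indicator_of_mem hω]
      obtain ⟨hmem, hineq⟩ := hω
      rw [hg_def, Set.indicator_of_mem hmem,
        ← ENNReal.ofReal_mul (Real.exp_nonneg _), ← ENNReal.ofReal_mul (by positivity),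
        ← Real.exp_add, ← Real.exp_add]
      simp only [Pi.one_apply]
      rw [show (1:ℝ≥0∞) = ENNReal.ofReal (Real.exp 0) by simp]
      apply ENNReal.ofReal_le_ofReal
      apply Real.exp_le_exp.2
      linarith
    · rw [Set.indicator_of_notMem hω]
      exact zero_le
  have h2 : ∫⁻ ω, (g (S ω) * ENNReal.ofReal (Real.exp (θ * N ω)))
      * ENNReal.ofReal (Real.exp (-κ)) ∂μ
      = (∫⁻ ω, g (S ω) * ENNReal.ofReal (Real.exp (lam * (Real.exp θ - 1) * S ω)) ∂μ)
        * ENNReal.ofReal (Real.exp (-κ)) := by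
    rw [lintegral_mul_const _ (show Measurable fun ω => g (S ω) * ENNReal.ofReal (Real.exp (θ * N ω)) from hgS.mul hexpN),
      L2 hSmeas hSnonneg hlam hNmeas hN θ hg]
  have h3 : ∫⁻ ω, g (S ω) * ENNReal.ofReal (Real.exp (lam * (Real.exp θ - 1) * S ω)) ∂μ
      ≤ ENNReal.ofReal (Real.exp R) := by
    calc ∫⁻ ω, g (S ω) * ENNReal.ofReal (Real.exp (lam * (Real.exp θ - 1) * S ω)) ∂μ
        ≤ ∫⁻ _, ENNReal.ofReal (Real.exp R) ∂μ := by
          apply lintegral_mono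
          intro ω
          dsimp only
          by_cases hmem : S ω ∈ A
          · rw [hg_def, Set.indicator_of_mem hmem, ← ENNReal.ofReal_mul (Real.exp_nonneg _),
              ← Real.exp_add]
            apply ENNReal.ofReal_le_ofReal
            apply Real.exp_le_exp.2
            have := hb (S ω) hmem
            linarith [hb (S ω) hmem, show -β * S ω + lam * (Real.exp θ - 1) * S ω
              = (lam * (Real.exp θ - 1) - β) * S ω from by ring]
          · rw [hg_def, Set.indicator_of_notMem hmem, zero_mul]
            exact zero_le
      _ = ENNReal.ofReal (Real.exp R) := by simp
  calc μ E ≤ _ := h1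
    _ = _ := h2
    _ ≤ ENNReal.ofReal (Real.exp R) * ENNReal.ofReal (Real.exp (-κ)) :=
        mul_le_mul_left h3 _
    _ = ENNReal.ofReal (Real.exp (R - κ)) := by
        rw [← ENNReal.ofReal_mul (Real.exp_nonneg _), ← Real.exp_add, sub_eq_add_neg]


lemma exp_taylor_bound {t : ℝ} (ht : |t| ≤ 1) : Real.exp t - 1 - t ≤ 2 * t ^ 2 := by
  have h := Real.exp_bound ht (n := 2) (by norm_num)
  have h2 : |Real.exp t - (1 + t)| ≤ |t| ^ 2 * (3 / 4) := by
    convert h using 3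
    · rw [Finset.sum_range_succ, Finset.sum_range_one]
      norm_num
    · norm_num [Nat.factorial]
    all_goals norm_num [Nat.factorial]
  have h3 := (abs_le.1 h2).2
  have hsq : |t| ^ 2 = t ^ 2 := sq_abs t
  nlinarith

lemma growth {f : ℝ → ℝ} (hf0 : ∀ x, 0 < f x) (hanti : Antitone f)
    {r : ℝ} (hr : 0 < r) (hev : ∀ᶠ x in atTop, r * f x ≤ f (2 * x))
    {γ : ℝ} (hγ : 0 < γ) :
    Tendsto (fun x => f x * Real.exp (γ * x)) atTop atTop := by
  classical
  rcases eventually_atTop.1 hev with ⟨x₀, hx₀⟩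
  set X := max x₀ (max 1 (Real.log (2 / r) / γ)) with hX_def
  have hX1 : (1:ℝ) ≤ X := le_trans (le_max_left _ _) (le_max_right _ _)
  have hX0 : (0:ℝ) < X := lt_of_lt_of_le one_pos hX1
  have hXx₀ : x₀ ≤ X := le_max_left _ _
  have hexpX : ∀ x, X ≤ x → 2 / r ≤ Real.exp (γ * x) := by
    intro x hx
    have h1 : Real.log (2 / r) / γ ≤ x :=
      le_trans (le_trans (le_max_right _ _) (le_max_right _ _)) hx
    have h2 : Real.log (2 / r) ≤ γ * x := by
      rw [div_le_iff₀ hγ] at h1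
      linarith
    calc 2 / r = Real.exp (Real.log (2 / r)) := (Real.exp_log (by positivity)).symm
      _ ≤ Real.exp (γ * x) := Real.exp_le_exp.2 h2
  set g := fun x => f x * Real.exp (γ * x) with hg_def
  have hgpos : ∀ x, 0 < g x := fun x => mul_pos (hf0 x) (Real.exp_pos _)
  have hdbl : ∀ x, X ≤ x → 2 * g x ≤ g (2 * x) := by
    intro x hx
    have h1 : r * f x ≤ f (2 * x) := hx₀ x (le_trans hXx₀ hx)
    have h2 : 2 / r ≤ Real.exp (γ * x) := hexpX x hx
    have h2' : 2 ≤ r * Real.exp (γ * x) := by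
      rw [div_le_iff₀ hr] at h2
      linarith
    have h3 : Real.exp (γ * (2 * x)) = Real.exp (γ * x) * Real.exp (γ * x) := by
      rw [← Real.exp_add]
      ring_nf
    have hfx := hf0 x
    have hf2x := hf0 (2 * x)
    have he := Real.exp_pos (γ * x)
    show 2 * (f x * Real.exp (γ * x)) ≤ f (2 * x) * Real.exp (γ * (2 * x))
    rw [h3]
    calc 2 * (f x * Real.exp (γ * x))
        ≤ (r * Real.exp (γ * x)) * (f x * Real.exp (γ * x)) :=
          mul_le_mul_of_nonneg_right h2' (by positivity)
      _ = (r * f x) * (Real.exp (γ * x) * Real.exp (γ * x)) := by ring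
      _ ≤ f (2 * x) * (Real.exp (γ * x) * Real.exp (γ * x)) := by nlinarith
  set m := f (2 * X) * Real.exp (γ * X) with hm_def
  have hm : 0 < m := mul_pos (hf0 _) (Real.exp_pos _)
  have claim : ∀ n : ℕ, ∀ x : ℝ, 2 ^ n * X ≤ x → x ≤ 2 ^ (n + 1) * X → 2 ^ n * m ≤ g x := by
    intro n
    induction n with
    | zero =>
      intro x h1 h2
      rw [pow_zero, one_mul] at h1 ⊢
      rw [pow_one] at h2
      have hf' : f (2 * X) ≤ f x := hanti h2
      have hexp' : Real.exp (γ * X) ≤ Real.exp (γ * x) :=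
        Real.exp_le_exp.2 (by nlinarith)
      have := Real.exp_pos (γ * X)
      have := hf0 (2 * X)
      show m ≤ f x * Real.exp (γ * x)
      rw [hm_def]
      nlinarith
    | succ n ih =>
      intro x h1 h2
      have hy1 : 2 ^ n * X ≤ x / 2 := by
        rw [pow_succ] at h1
        linarith
      have hy2 : x / 2 ≤ 2 ^ (n + 1) * X := by
        rw [pow_succ] at h2
        linarith
      have hyX : X ≤ x / 2 := by
        refine le_trans ?_ hy1
        nlinarith [one_le_pow₀ (by norm_num : (1:ℝ) ≤ 2) (n := n)]
      have hd := hdbl (x / 2) hyX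
      rw [show 2 * (x / 2) = x from by ring] at hd
      have hi := ih (x / 2) hy1 hy2
      calc (2:ℝ) ^ (n + 1) * m = 2 * (2 ^ n * m) := by ring
        _ ≤ 2 * g (x / 2) := by linarith
        _ ≤ g x := hd
  have claim2 : ∀ n : ℕ, ∀ x : ℝ, 2 ^ n * X ≤ x → 2 ^ n * m ≤ g x := by
    intro n x hx
    have hpow1 : (1:ℝ) ≤ 2 ^ n := one_le_pow₀ (by norm_num : (1:ℝ) ≤ 2) (n := n)
    have hxX : X ≤ x := le_trans (by nlinarith) hx
    have hex : ∃ j : ℕ, x < 2 ^ j * X := by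
      obtain ⟨j, hj⟩ := pow_unbounded_of_one_lt x (by norm_num : (1:ℝ) < 2)
      exact ⟨j, lt_of_lt_of_le hj (le_mul_of_one_le_right (by positivity) hX1)⟩
    set j := Nat.find hex with hj_def
    have hj : x < 2 ^ j * X := Nat.find_spec hex
    have hjpos : 0 < j := by
      rcases Nat.eq_zero_or_pos j with h | h
      · exfalso
        rw [h, pow_zero, one_mul] at hj
        linarith
      · exact h
    have hmin : 2 ^ (j - 1) * X ≤ x :=
      not_lt.1 (Nat.find_min hex (Nat.sub_lt hjpos one_pos))
    have hji : x ≤ 2 ^ ((j - 1) + 1) * X := by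
      rw [Nat.sub_add_cancel hjpos]
      exact hj.le
    have hni : n ≤ j - 1 := by
      by_contra hc
      push_neg at hc
      have hle : (2:ℝ) ^ j ≤ 2 ^ n := by
        apply pow_le_pow_right₀ (by norm_num : (1:ℝ) ≤ 2)
        omega
      nlinarith
    have hc1 := claim (j - 1) x hmin hji
    have hc2 : (2:ℝ) ^ n ≤ 2 ^ (j - 1) := pow_le_pow_right₀ (by norm_num : (1:ℝ) ≤ 2) hni
    nlinarith
  rw [tendsto_atTop]
  intro M
  obtain ⟨n, hn⟩ := pow_unbounded_of_one_lt (M / m) (by norm_num : (1:ℝ) < 2)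
  have hMn : M ≤ 2 ^ n * m := by
    rw [div_lt_iff₀ hm] at hn
    linarith
  filter_upwards [eventually_ge_atTop (2 ^ n * X)] with x hx
  exact le_trans hMn (claim2 n x hx)

end Stmt13Aux

open Stmt13Aux

set_option maxHeartbeats 1000000 in
/-- Let `S` be a nonnegative random variable with regularly varying
tail of index `α > 0`, `λ > 0`, and `N` conditionally Poisson with mean `λS` given `S`.
Then, conditionally on `S + N > x`, the ratio `S/(S+N)` converges in probability to
`1/(1+λ)` as `x → ∞`. -/
theorem stmt13 {Ω : Type*} [MeasurableSpace Ω] (μ : Measure Ω)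
    [IsProbabilityMeasure μ]
    (S : Ω → ℝ) (hSmeas : Measurable S) (hSnonneg : ∀ ω, 0 ≤ S ω)
    (α : ℝ) (hα : 0 < α) (hSrv : RegVaryingTailRV μ S α)
    (lam : ℝ) (hlam : 0 < lam)
    (N : Ω → ℕ) (hNmeas : Measurable N) (hN : CondPoisson μ S lam N) :
    ∀ ε : ℝ, 0 < ε →
      Tendsto (fun x =>
          (μ {ω | x < S ω + N ω ∧ ε < |S ω / (S ω + N ω) - 1 / (1 + lam)|}).toReal
            / (μ {ω | x < S ω + N ω}).toReal) atTop (nhds 0) := by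
  intro ε hε
  classical
  have h1lam : (0:ℝ) < 1 + lam := by linarith
  set c := ε * (1 + lam) with hc_def
  have hc : 0 < c := mul_pos hε h1lam
  set θ₀ := min 1 (c / (4 * lam)) with hθ₀_def
  have hθ₀pos : 0 < θ₀ := lt_min one_pos (by positivity)
  have hθ₀le1 : θ₀ ≤ 1 := min_le_left _ _
  have hθ₀le : θ₀ ≤ c / (4 * lam) := min_le_right _ _
  have hθ₀lam : 2 * lam * θ₀ ≤ c / 2 := by
    rw [le_div_iff₀ (by positivity)] at hθ₀le
    linarith
  have hexp1 : (2:ℝ) ≤ Real.exp 1 := by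
    have := Real.add_one_le_exp 1
    linarith
  set δ := c / (2 * lam * (Real.exp 1 - 1)) with hδ_def
  have hδpos : 0 < δ := by
    apply div_pos hc
    nlinarith
  have he1ne : Real.exp 1 - 1 ≠ 0 := by nlinarith
  have hδeq : lam * (Real.exp 1 - 1) * δ = c / 2 := by
    rw [hδ_def]
    field_simp
  set γ := min (c / 2) (min ((θ₀ * c / 2) * δ) ((θ₀ * c / 2) * (c / lam))) with hγ_def
  have hγpos : 0 < γ :=
    lt_min (by positivity) (lt_min (by positivity) (by positivity))
  have hγ1 : γ ≤ c / 2 := min_le_left _ _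
  have hγ2 : γ ≤ (θ₀ * c / 2) * δ := le_trans (min_le_right _ _) (min_le_left _ _)
  have hγ3 : γ ≤ (θ₀ * c / 2) * (c / lam) := le_trans (min_le_right _ _) (min_le_right _ _)
  have hcoef1 : lam * (Real.exp θ₀ - 1) - θ₀ * (lam + c) ≤ -(θ₀ * c / 2) := by
    have h := exp_taylor_bound (t := θ₀) (by rw [abs_of_pos hθ₀pos]; exact hθ₀le1)
    nlinarith [mul_le_mul_of_nonneg_left hθ₀lam hθ₀pos.le]
  have hcoef2 : lam * (Real.exp (-θ₀) - 1) - (-(θ₀ * (lam - c))) ≤ -(θ₀ * c / 2) := by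
    have h := exp_taylor_bound (t := -θ₀) (by rw [abs_neg, abs_of_pos hθ₀pos]; exact hθ₀le1)
    nlinarith [mul_le_mul_of_nonneg_left hθ₀lam hθ₀pos.le]
  -- Numerator bound
  have key : ∀ x : ℝ, 0 < x →
      (μ {ω | x < S ω + N ω ∧ ε < |S ω / (S ω + N ω) - 1 / (1 + lam)|}).toReal
        ≤ 3 * Real.exp (-γ * x) := by
    intro x hx
    apply ENNReal.toReal_le_of_le_ofReal (by positivity)
    have hB1 : μ {ω | S ω ∈ Set.Iic (δ * x) ∧ 0 * S ω + c * x ≤ 1 * (N ω : ℝ)}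
        ≤ ENNReal.ofReal (Real.exp (-γ * x)) := by
      refine le_trans (chernoff hSmeas hSnonneg hlam hNmeas hN 1 0 (c * x) (c * x / 2)
        measurableSet_Iic ?_) (ENNReal.ofReal_le_ofReal (Real.exp_le_exp.2 ?_))
      · intro s hs
        simp only [Set.mem_Iic] at hs
        have h0 : (0:ℝ) ≤ lam * (Real.exp 1 - 1) := by nlinarith
        calc (lam * (Real.exp 1 - 1) - 0) * s ≤ lam * (Real.exp 1 - 1) * (δ * x) := by nlinarith
          _ = c / 2 * x := by rw [← mul_assoc, hδeq]
          _ = c * x / 2 := by ring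
      · nlinarith [hγ1]
    have hB2 : μ {ω | S ω ∈ Set.Ioi (δ * x) ∧ θ₀ * (lam + c) * S ω + 0 ≤ θ₀ * (N ω : ℝ)}
        ≤ ENNReal.ofReal (Real.exp (-γ * x)) := by
      refine le_trans (chernoff hSmeas hSnonneg hlam hNmeas hN θ₀ (θ₀ * (lam + c)) 0
        (-(θ₀ * c / 2) * (δ * x)) measurableSet_Ioi ?_)
        (ENNReal.ofReal_le_ofReal (Real.exp_le_exp.2 ?_))
      · intro s hs
        simp only [Set.mem_Ioi] at hs
        have hs0 : 0 < s := lt_of_le_of_lt (by positivity) hs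
        nlinarith [hcoef1, mul_le_mul_of_nonneg_right hcoef1 hs0.le]
      · nlinarith [hγ2]
    have hB3 : μ {ω | S ω ∈ Set.Ioi (c / lam * x) ∧ -(θ₀ * (lam - c)) * S ω + 0 ≤ -θ₀ * (N ω : ℝ)}
        ≤ ENNReal.ofReal (Real.exp (-γ * x)) := by
      refine le_trans (chernoff hSmeas hSnonneg hlam hNmeas hN (-θ₀) (-(θ₀ * (lam - c))) 0
        (-(θ₀ * c / 2) * (c / lam * x)) measurableSet_Ioi ?_)
        (ENNReal.ofReal_le_ofReal (Real.exp_le_exp.2 ?_))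
      · intro s hs
        simp only [Set.mem_Ioi] at hs
        have hs0 : 0 < s := lt_of_le_of_lt (by positivity) hs
        nlinarith [hcoef2, mul_le_mul_of_nonneg_right hcoef2 hs0.le]
      · nlinarith [hγ3]
    have hcov : {ω | x < S ω + N ω ∧ ε < |S ω / (S ω + N ω) - 1 / (1 + lam)|}
        ⊆ {ω | S ω ∈ Set.Iic (δ * x) ∧ 0 * S ω + c * x ≤ 1 * (N ω : ℝ)}
          ∪ ({ω | S ω ∈ Set.Ioi (δ * x) ∧ θ₀ * (lam + c) * S ω + 0 ≤ θ₀ * (N ω : ℝ)}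
          ∪ {ω | S ω ∈ Set.Ioi (c / lam * x) ∧ -(θ₀ * (lam - c)) * S ω + 0 ≤ -θ₀ * (N ω : ℝ)}) := by
      intro ω hω
      obtain ⟨hT, habs⟩ := hω
      have hs := hSnonneg ω
      have hn : (0:ℝ) ≤ (N ω : ℝ) := Nat.cast_nonneg _
      have hTpos : 0 < S ω + N ω := lt_trans hx hT
      have heq : S ω / (S ω + N ω) - 1 / (1 + lam)
          = (lam * S ω - N ω) / ((1 + lam) * (S ω + N ω)) := by
        field_simp
        ring
      rw [heq, abs_div, abs_of_pos (mul_pos h1lam hTpos)] at habs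
      rw [lt_div_iff₀ (mul_pos h1lam hTpos)] at habs
      have hkey : c * (S ω + N ω) < |lam * S ω - N ω| := by
        calc c * (S ω + N ω) = ε * ((1 + lam) * (S ω + N ω)) := by rw [hc_def]; ring
          _ < |lam * S ω - N ω| := habs
      rcases le_or_gt ((N ω : ℝ)) (lam * S ω) with hcase | hcase
      · rw [abs_of_nonneg (by linarith)] at hkey
        right; right
        refine ⟨?_, ?_⟩
        · show c / lam * x < S ω
          rw [div_mul_eq_mul_div, div_lt_iff₀ hlam]
          nlinarith
        · show -(θ₀ * (lam - c)) * S ω + 0 ≤ -θ₀ * (N ω : ℝ)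
          have hles : (N ω : ℝ) ≤ (lam - c) * S ω := by nlinarith
          nlinarith [mul_le_mul_of_nonneg_left hles hθ₀pos.le]
      · rw [abs_of_neg (by linarith)] at hkey
        by_cases hsd : S ω ≤ δ * x
        · left
          exact ⟨hsd, by nlinarith⟩
        · right; left
          refine ⟨lt_of_not_ge hsd, ?_⟩
          show θ₀ * (lam + c) * S ω + 0 ≤ θ₀ * (N ω : ℝ)
          have hles : (lam + c) * S ω ≤ (N ω : ℝ) := by nlinarith
          nlinarith [mul_le_mul_of_nonneg_left hles hθ₀pos.le]
    calc μ {ω | x < S ω + N ω ∧ ε < |S ω / (S ω + N ω) - 1 / (1 + lam)|}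
        ≤ μ ({ω | S ω ∈ Set.Iic (δ * x) ∧ 0 * S ω + c * x ≤ 1 * (N ω : ℝ)}
          ∪ ({ω | S ω ∈ Set.Ioi (δ * x) ∧ θ₀ * (lam + c) * S ω + 0 ≤ θ₀ * (N ω : ℝ)}
          ∪ {ω | S ω ∈ Set.Ioi (c / lam * x) ∧ -(θ₀ * (lam - c)) * S ω + 0 ≤ -θ₀ * (N ω : ℝ)})) :=
          measure_mono hcov
      _ ≤ μ {ω | S ω ∈ Set.Iic (δ * x) ∧ 0 * S ω + c * x ≤ 1 * (N ω : ℝ)}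
          + μ ({ω | S ω ∈ Set.Ioi (δ * x) ∧ θ₀ * (lam + c) * S ω + 0 ≤ θ₀ * (N ω : ℝ)}
          ∪ {ω | S ω ∈ Set.Ioi (c / lam * x) ∧ -(θ₀ * (lam - c)) * S ω + 0 ≤ -θ₀ * (N ω : ℝ)}) :=
          measure_union_le _ _
      _ ≤ μ {ω | S ω ∈ Set.Iic (δ * x) ∧ 0 * S ω + c * x ≤ 1 * (N ω : ℝ)}
          + (μ {ω | S ω ∈ Set.Ioi (δ * x) ∧ θ₀ * (lam + c) * S ω + 0 ≤ θ₀ * (N ω : ℝ)}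
          + μ {ω | S ω ∈ Set.Ioi (c / lam * x) ∧ -(θ₀ * (lam - c)) * S ω + 0 ≤ -θ₀ * (N ω : ℝ)}) :=
          add_le_add_right (measure_union_le _ _) _
      _ ≤ ENNReal.ofReal (Real.exp (-γ * x)) + (ENNReal.ofReal (Real.exp (-γ * x))
          + ENNReal.ofReal (Real.exp (-γ * x))) := by
          exact add_le_add hB1 (add_le_add hB2 hB3)
      _ = ENNReal.ofReal (3 * Real.exp (-γ * x)) := by
          rw [← ENNReal.ofReal_add (Real.exp_nonneg _) (Real.exp_nonneg _),
            ← ENNReal.ofReal_add (Real.exp_nonneg _) (by positivity)]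
          congr 1
          ring
  -- Denominator
  set f : ℝ → ℝ := fun x => (μ {ω | x < S ω}).toReal with hf_def
  have hfpos : ∀ x, 0 < f x := hSrv.1
  have hfanti : Antitone f := by
    intro a b hab
    apply ENNReal.toReal_mono (measure_ne_top _ _)
    apply measure_mono
    intro ω h
    exact lt_of_le_of_lt hab h
  have hdblf : ∀ᶠ x in atTop, (2:ℝ) ^ (-α) / 2 * f x ≤ f (2 * x) := by
    have h2 := hSrv.2 2 two_pos
    have hpow : (0:ℝ) < 2 ^ (-α) := Real.rpow_pos_of_pos two_pos _
    have hev := h2.eventually (eventually_gt_nhds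
      (show (2:ℝ) ^ (-α) / 2 < 2 ^ (-α) by linarith))
    filter_upwards [hev] with x hx
    rw [lt_div_iff₀ (hfpos x)] at hx
    linarith
  have hgrow : Tendsto (fun x => f x * Real.exp (γ * x)) atTop atTop :=
    growth hfpos hfanti (by positivity) hdblf hγpos
  have hfD : ∀ x : ℝ, f x ≤ (μ {ω | x < S ω + N ω}).toReal := by
    intro x
    apply ENNReal.toReal_mono (measure_ne_top _ _)
    apply measure_mono
    intro ω h
    have hn : (0:ℝ) ≤ (N ω : ℝ) := Nat.cast_nonneg _
    simp only [Set.mem_setOf_eq] at h ⊢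
    linarith
  have hupper : Tendsto (fun x => 3 / (f x * Real.exp (γ * x))) atTop (nhds 0) := by
    have h := hgrow.inv_tendsto_atTop
    have h2 := h.const_mul (3:ℝ)
    rw [mul_zero] at h2
    simpa [div_eq_mul_inv] using h2
  apply squeeze_zero' ?_ ?_ hupper
  · filter_upwards with x
    exact div_nonneg ENNReal.toReal_nonneg ENNReal.toReal_nonneg
  · filter_upwards [eventually_gt_atTop 0] with x hx
    have h1 := key x hx
    have h2 := hfpos x
    have h3 := hfD x
    calc (μ {ω | x < S ω + N ω ∧ ε < |S ω / (S ω + N ω) - 1 / (1 + lam)|}).toReal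
          / (μ {ω | x < S ω + N ω}).toReal
        ≤ (3 * Real.exp (-γ * x)) / f x :=
          div_le_div₀ (by positivity) h1 h2 h3
      _ = 3 / (f x * Real.exp (γ * x)) := by
          rw [show -γ * x = -(γ * x) from by ring, Real.exp_neg]
          field_simp
end
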